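/- arXiv:1809.10767 — 5 statements merged into one kernel-verified Lean document; each statement's English description precedes it below -/
import Mathlib

section
/- Let T be a tree on n vertices. Then SW_3(T) = ((n-2)/2) · W(T). -/
/-- The Steiner distance of a set `S` of vertices of `G`: the minimum number of edges
of a connected subgraph of `G` containing all vertices of `S`. -/
noncomputable def steinerDist {V : Type*} (G : SimpleGraph V) (S : Set V) : ℕ :=
  sInf {n | ∃ H : G.Subgraph, H.Connected ∧ S ⊆ H.verts ∧ H.edgeSet.ncard = n}
/-- The Wiener index of `G`: the sum of distances over all unordered pairs of vertices. -/
noncomputable def wienerIndex {V : Type*} (G : SimpleGraph V) [Fintype V] : ℕ :=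
  ∑ p ∈ (Finset.univ : Finset V).sym2,
    Sym2.lift ⟨fun u v => G.dist u v, fun _ _ => SimpleGraph.dist_comm⟩ p
/-- The Steiner `k`-Wiener index of `G`: the sum of the Steiner distances of all
`k`-element subsets of vertices of `G`. -/
noncomputable def steinerWiener {V : Type*} (G : SimpleGraph V) [Fintype V] (k : ℕ) : ℕ :=
  ∑ S ∈ (Finset.univ : Finset V).powersetCard k, steinerDist G (S : Set V)

/-!
In a tree, let `P` be the path from `u` to `v` and `A` the path from `w` to the first vertex `m`
at which it meets `P`. Any connected subgraph containing `u, v, w` contains both paths, which share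
only `m`, so it has at least `|P| + |A| + 1` vertices and hence at least `|P| + |A|` edges; and
`P ∪ A` attains this. As `d(u,w) = d(u,m) + |A|` and `d(v,w) = d(v,m) + |A|`, the Steiner
distance of `{u, v, w}` is half of `d(u,v) + d(u,w) + d(v,w)`. Summing over all triples, each
pair of distinct vertices lies in exactly `n - 2` of them, so `2 SW₃(T) = (n - 2) W(T)`.
-/

open Finset

namespace Finset

variable {α M : Type*} [AddCommMonoid M]

lemma sum_sym2_insert [DecidableEq α] (f : Sym2 α → M) {a : α} {s : Finset α} (ha : a ∉ s) :
    ∑ p ∈ (insert a s).sym2, f p = ∑ b ∈ insert a s, f s(a, b) + ∑ p ∈ s.sym2, f p := by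
  rw [← cons_eq_insert _ _ ha, sym2_cons, sum_disjUnion, sum_map]
  rfl

lemma sum_sym2_triple [DecidableEq α] {a b c : α} (hab : a ≠ b) (hac : a ≠ c) (hbc : b ≠ c)
    (f : Sym2 α → M) (hf : ∀ x, f s(x, x) = 0) :
    ∑ p ∈ ({a, b, c} : Finset α).sym2, f p = f s(a, b) + f s(a, c) + f s(b, c) := by
  rw [sum_sym2_insert f (by simp [hab, hac]), sum_sym2_insert f (by simpa using hbc)]
  simp [Sym2.diag, hf, hab, hac, hbc, add_assoc]

lemma sum_powersetCard_sum_sym2 [Fintype α] [DecidableEq α] {k : ℕ} (hk : 2 ≤ k)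
    (f : Sym2 α → M) (hf : ∀ x, f s(x, x) = 0) :
    ∑ S ∈ univ.powersetCard k, ∑ p ∈ S.sym2, f p =
      (Fintype.card α - 2).choose (k - 2) • ∑ p ∈ univ.sym2, f p := by
  rw [sum_comm' (t' := univ.sym2) (s' := fun p => (univ.powersetCard k).filter (p ∈ ·.sym2))
    (by intro S p; simp), smul_sum]
  refine sum_congr rfl fun p _ => ?_
  rw [sum_const]
  induction p using Sym2.ind with
  | _ a b =>
    obtain rfl | hab := eq_or_ne a b
    · simp [hf]
    have hpair : #({a, b} : Finset α) = 2 := card_pair hab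
    have := card_filter_powersetCard_subset {a, b} univ k (subset_univ _) (hpair ▸ hk)
    rw [hpair, card_univ] at this
    rw [← this]
    congr 2
    ext S
    simp [insert_subset_iff]

end Finset

lemma steinerDist_eq {V : Type*} {G : SimpleGraph V} {S : Set V} {n : ℕ} (H₀ : G.Subgraph)
    (h₀ : H₀.Connected) (hS₀ : S ⊆ H₀.verts) (hn₀ : H₀.edgeSet.ncard ≤ n)
    (h : ∀ H : G.Subgraph, H.Connected → S ⊆ H.verts → n ≤ H.edgeSet.ncard) :
    steinerDist G S = n := by
  have h₀mem : H₀.edgeSet.ncard ∈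
      {n | ∃ H : G.Subgraph, H.Connected ∧ S ⊆ H.verts ∧ H.edgeSet.ncard = n} :=
    ⟨H₀, h₀, hS₀, rfl⟩
  exact le_antisymm ((Nat.sInf_le h₀mem).trans hn₀)
    (le_csInf ⟨_, h₀mem⟩ fun _ ⟨H, hH, hS, hn⟩ => hn ▸ h H hH hS)

lemma wienerIndex_eq_zero {V : Type*} [Fintype V] [Subsingleton V] (G : SimpleGraph V) :
    wienerIndex G = 0 :=
  sum_eq_zero fun p _ => p.ind fun a b => by simp [Subsingleton.elim a b]

namespace SimpleGraph

variable {V : Type*} {G : SimpleGraph V}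

namespace Walk

lemma ncard_edgeSet_toSubgraph_le {u v : V} (p : G.Walk u v) :
    p.toSubgraph.edgeSet.ncard ≤ p.length := by
  classical
  calc p.toSubgraph.edgeSet.ncard = #p.edges.toFinset := by
        rw [edgeSet_toSubgraph, ← Set.ncard_coe_finset]; congr 1; ext; simp [Walk.edgeSet]
    _ ≤ p.edges.length := List.toFinset_card_le _
    _ = p.length := length_edges p

lemma IsPath.append {u v w : V} {p : G.Walk u v} {q : G.Walk v w}
    (hp : p.IsPath) (hq : q.IsPath) (h : ∀ x ∈ p.support, x ∈ q.support → x = v) :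
    (p.append q).IsPath := by
  rw [isPath_def, support_append]
  have hq' := hq.support_nodup
  rw [← q.cons_tail_support, List.nodup_cons] at hq'
  refine hp.support_nodup.append hq'.2 fun x hxp hxq => ?_
  obtain rfl := h x hxp (q.cons_tail_support ▸ List.mem_cons_of_mem _ hxq)
  exact hq'.1 hxq

lemma exists_eq_append_of_mem {S : Set V} {w u : V} (R : G.Walk w u) (hu : u ∈ S) :
    ∃ m ∈ S, ∃ (A : G.Walk w m) (B : G.Walk m u), R = A.append B ∧
      ∀ x ∈ A.support, x ∈ S → x = m := by
  induction R with
  | nil => exact ⟨_, hu, nil, nil, rfl, by simp⟩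
  | @cons a b c hadj R ih =>
    by_cases ha : a ∈ S
    · exact ⟨a, ha, nil, cons hadj R, rfl, by simp⟩
    obtain ⟨m, hm, A, B, rfl, hfirst⟩ := ih hu
    refine ⟨m, hm, cons hadj A, B, rfl, fun x hx hxS => ?_⟩
    rcases List.mem_cons.mp (support_cons _ _ ▸ hx) with rfl | hx
    · exact absurd hxS ha
    · exact hfirst x hx hxS

end Walk

lemma IsAcyclic.eq_of_isPath (hG : G.IsAcyclic) {u v : V} {p q : G.Walk u v} (hp : p.IsPath)
    (hq : q.IsPath) : p = q :=
  congrArg Subtype.val ((hG.subsingleton_path u v).elim ⟨p, hp⟩ ⟨q, hq⟩)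

lemma IsAcyclic.length_eq_dist (hG : G.IsAcyclic) {u v : V} {p : G.Walk u v} (hp : p.IsPath) :
    p.length = G.dist u v := by
  obtain ⟨q, hq, hql⟩ := p.reachable.exists_path_of_dist
  rw [← hql, hG.eq_of_isPath hp hq]

lemma IsAcyclic.support_subset_verts (hG : G.IsAcyclic) {H : G.Subgraph} (hH : H.Preconnected)
    {u v : V} {p : G.Walk u v} (hp : p.IsPath) (hu : u ∈ H.verts) (hv : v ∈ H.verts) :
    {x | x ∈ p.support} ⊆ H.verts := by
  obtain ⟨q, hq⟩ := (hH ⟨u, hu⟩ ⟨v, hv⟩).exists_isPath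
  have hsupp : p.support = q.support.map H.hom := by
    rw [← Walk.support_map]
    exact congrArg Walk.support (hG.eq_of_isPath hp (hq.map Subgraph.hom_injective))
  rintro x hx
  obtain ⟨y, -, rfl⟩ := List.mem_map.mp (hsupp ▸ hx)
  exact y.2

lemma Subgraph.Connected.ncard_verts_le [Finite V] {H : G.Subgraph} (hH : H.Connected) :
    H.verts.ncard ≤ H.edgeSet.ncard + 1 := by
  have := hH.coe.card_vert_le_card_edgeSet_add_one
  rwa [Nat.card_coe_set_eq, Nat.card_coe_set_eq, ← Set.ncard_image_of_injective _
    (Sym2.map.injective Subtype.val_injective), H.image_coe_edgeSet_coe] at this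

lemma IsAcyclic.steinerDist_eq_length_add_length [Finite V] (hG : G.IsAcyclic) {u v w m : V}
    {P : G.Walk u v} {A : G.Walk w m} (hP : P.IsPath) (hA : A.IsPath) (hm : m ∈ P.support)
    (hAP : ∀ x ∈ A.support, x ∈ P.support → x = m) :
    steinerDist G {u, v, w} = P.length + A.length := by
  classical
  refine steinerDist_eq (P.toSubgraph ⊔ A.toSubgraph) ?_ ?_ ?_ fun H hH hS => ?_
  · exact Subgraph.connected_sup P.toSubgraph_connected.preconnected
      A.toSubgraph_connected.preconnected ⟨m, by simp [hm]⟩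
  · rintro x (rfl | rfl | rfl) <;> simp
  · calc (P.toSubgraph ⊔ A.toSubgraph).edgeSet.ncard
        ≤ P.toSubgraph.edgeSet.ncard + A.toSubgraph.edgeSet.ncard := by
          rw [Subgraph.edgeSet_sup]; exact Set.ncard_union_le _ _
      _ ≤ P.length + A.length :=
          add_le_add P.ncard_edgeSet_toSubgraph_le A.ncard_edgeSet_toSubgraph_le
  have hPH := hG.support_subset_verts hH.preconnected hP (hS (by simp)) (hS (by simp))
  have hAH := hG.support_subset_verts hH.preconnected hA (hS (by simp)) (hPH hm)
  have hinter : P.support.toFinset ∩ A.support.toFinset = {m} := by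
    ext x
    simp only [mem_inter, List.mem_toFinset, mem_singleton]
    exact ⟨fun ⟨hxP, hxA⟩ => hAP x hxA hxP, by rintro rfl; exact ⟨hm, A.end_mem_support⟩⟩
  have hcard := card_union_add_card_inter P.support.toFinset A.support.toFinset
  rw [hinter, card_singleton, List.toFinset_card_of_nodup hP.support_nodup,
    List.toFinset_card_of_nodup hA.support_nodup, Walk.length_support,
    Walk.length_support] at hcard
  have hsub : ((P.support.toFinset ∪ A.support.toFinset : Finset V) : Set V) ⊆ H.verts := by
    intro x hx
    simp only [coe_union, Set.mem_union, mem_coe, List.mem_toFinset] at hx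
    exact hx.elim (hPH ·) (hAH ·)
  have hverts := (Set.ncard_coe_finset _).symm.trans_le (Set.ncard_le_ncard hsub (Set.toFinite _))
  have hedges := hH.ncard_verts_le
  omega

theorem IsTree.two_mul_steinerDist [Finite V] (hG : G.IsTree) (u v w : V) :
    2 * steinerDist G {u, v, w} = G.dist u v + G.dist u w + G.dist v w := by
  classical
  obtain ⟨P, hP, hPl⟩ := hG.connected.exists_path_of_dist u v
  obtain ⟨R, hR, -⟩ := hG.connected.exists_path_of_dist w u
  obtain ⟨m, hm, A, B, rfl, hAP⟩ :=
    R.exists_eq_append_of_mem (S := {x | x ∈ P.support}) P.start_mem_support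
  have hA : A.IsPath := hR.of_append_left
  have hAD : (A.append (P.dropUntil m hm)).IsPath :=
    hA.append (hP.dropUntil hm) fun x hxA hxD =>
      hAP x hxA (P.support_dropUntil_subset_support hm hxD)
  have hacyc := hG.isAcyclic
  have huv : G.dist u v = G.dist u m + G.dist m v := by
    rw [← hacyc.length_eq_dist hP, ← P.take_spec hm, Walk.length_append,
      hacyc.length_eq_dist (hP.takeUntil hm), hacyc.length_eq_dist (hP.dropUntil hm)]
  have hwu : G.dist w u = A.length + G.dist m u := by
    rw [← hacyc.length_eq_dist hR, Walk.length_append, hacyc.length_eq_dist hR.of_append_right]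
  have hwv : G.dist w v = A.length + G.dist m v := by
    rw [← hacyc.length_eq_dist hAD, Walk.length_append, hacyc.length_eq_dist (hP.dropUntil hm)]
  rw [hacyc.steinerDist_eq_length_add_length hP hA hm hAP, hPl, dist_comm (u := u) (v := w),
    dist_comm (u := v) (v := w), hwu, hwv, dist_comm (u := m) (v := u)]
  omega

end SimpleGraph

open SimpleGraph in
/-- For a tree `T` on `n` vertices, `SW_3(T) = ((n-2)/2)·W(T)`. -/
theorem steinerWiener_three_tree {V : Type*} (T : SimpleGraph V) [Fintype V]
    (hconn : T.Connected) (hacyclic : T.IsAcyclic) :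
    (steinerWiener T 3 : ℝ) = ((Fintype.card V : ℝ) - 2) / 2 * wienerIndex T := by
  classical
  let d : Sym2 V → ℕ := Sym2.lift ⟨fun u v => T.dist u v, fun _ _ => dist_comm⟩
  have hd : ∀ x, d s(x, x) = 0 := by simp [d]
  have htriple : ∀ S ∈ univ.powersetCard 3, 2 * steinerDist T S = ∑ p ∈ S.sym2, d p := by
    intro S hS
    obtain ⟨u, v, w, huv, huw, hvw, rfl⟩ := card_eq_three.mp (mem_powersetCard.mp hS).2
    rw [sum_sym2_triple huv huw hvw d hd, coe_insert, coe_insert, coe_singleton,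
      IsTree.two_mul_steinerDist ⟨hconn, hacyclic⟩]
    rfl
  have hcount : 2 * steinerWiener T 3 = (Fintype.card V - 2) * wienerIndex T := by
    rw [steinerWiener, mul_sum, sum_congr rfl htriple,
      sum_powersetCard_sum_sym2 (by norm_num) d hd, Nat.choose_one_right, smul_eq_mul]
    rfl
  rcases le_or_gt 2 (Fintype.card V) with h2 | h2
  · have hcast := congrArg (Nat.cast : ℕ → ℝ) hcount
    push_cast [Nat.cast_sub h2] at hcast
    linarith
  · have : Subsingleton V := Fintype.card_le_one_iff_subsingleton.mp (by omega)
    have hSW : steinerWiener T 3 = 0 := by simpa [Nat.sub_eq_zero_of_le h2.le] using hcount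
    simp [hSW, wienerIndex_eq_zero]
end

section
/- Let G and H be connected modular graphs. Then SW_3(G □ H) = ((|V(G)|·|V(H)| − 2)/2) · ( |V(G)|² · W(H) + |V(H)|² · W(G) ). -/
/-- The interval `I(u,v)`: the set of all vertices lying on shortest `u,v`-paths. -/
def interval {V : Type*} (G : SimpleGraph V) (u v : V) : Set V :=
  {x | G.dist u x + G.dist x v = G.dist u v}
/-- A graph `G` is modular if for every three vertices `x, y, z` some vertex lies
simultaneously on shortest paths between every two of them. -/
def IsModular {V : Type*} (G : SimpleGraph V) : Prop :=
  ∀ x y z : V, (interval G x y ∩ interval G x z ∩ interval G y z).Nonempty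

/-!
In a modular graph a median `m` of `x, y, z` shows that the Steiner distance of `{x, y, z}` is
at most half the perimeter `d(x,y) + d(x,z) + d(y,z)`: join `m` to the three vertices by
shortest paths. Conversely every connected subgraph containing `x, y, z` contains a shortest
`x,y`-path together with an edge-disjoint path from `z` to a closest vertex of it, so it has at
least half the perimeter many edges. Since each ordered pair of distinct vertices lies in `n - 2`
of the 3-subsets, `4 SW₃(G) = (n - 2) ∑ᵤ ∑ᵥ d(u,v)`. Modularity and distances are additive in
`G □ H`, and `∑ᵤ ∑ᵥ d(u,v) = 2 W`, which gives the formula.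
-/

open SimpleGraph Finset

namespace SimpleGraph

variable {V : Type*} {G : SimpleGraph V}

namespace Walk

lemma ncard_edgeSet_le_length {u v : V} (p : G.Walk u v) : p.edgeSet.ncard ≤ p.length := by
  classical
  calc p.edgeSet.ncard = p.edges.toFinset.card := by
        rw [← Set.ncard_coe_finset]; congr 1; ext; simp [mem_edgeSet]
    _ ≤ p.edges.length := p.edges.toFinset_card_le
    _ = p.length := p.length_edges

lemma disjoint_edges_of_support_inter {u v u' v' w : V} {p : G.Walk u v} {q : G.Walk u' v'}
    (h : ∀ a ∈ p.support, a ∈ q.support → a = w) : p.edges.Disjoint q.edges := by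
  intro e hp hq
  induction e with
  | h a b =>
    have ha := h a (p.fst_mem_support_of_mem_edges hp) (q.fst_mem_support_of_mem_edges hq)
    have hb := h b (p.snd_mem_support_of_mem_edges hp) (q.snd_mem_support_of_mem_edges hq)
    exact (p.adj_of_mem_edges hp).ne (ha.trans hb.symm)

lemma length_add_length_le_ncard_edgeSet [Finite V] {u v u' v' : V} {p : G.Walk u v}
    {q : G.Walk u' v'} (hp : p.IsTrail) (hq : q.IsTrail) (hpq : p.edges.Disjoint q.edges) :
    p.length + q.length ≤ G.edgeSet.ncard := by
  classical
  have hnodup : (p.edges ++ q.edges).Nodup := List.nodup_append.2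
    ⟨hp.edges_nodup, hq.edges_nodup, fun _ he _ he' hee => hpq he (hee ▸ he')⟩
  calc p.length + q.length = (p.edges ++ q.edges).toFinset.card := by
        rw [List.toFinset_card_of_nodup hnodup, List.length_append, length_edges, length_edges]
    _ = ((p.edges ++ q.edges).toFinset : Set (Sym2 V)).ncard := (Set.ncard_coe_finset _).symm
    _ ≤ G.edgeSet.ncard := Set.ncard_le_ncard fun e he => by
        simp only [Finset.mem_coe, List.mem_toFinset, List.mem_append] at he
        exact he.elim (fun h => p.edges_subset_edgeSet h) (fun h => q.edges_subset_edgeSet h)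

lemma exists_isPath_to_support {u v z : V} (p : G.Walk u v) (hz : G.Reachable z u) :
    ∃ w ∈ p.support, ∃ q : G.Walk z w, q.IsPath ∧ q.length = G.dist z w ∧
      ∀ a ∈ q.support, a ∈ p.support → a = w := by
  classical
  obtain ⟨w, hw, hmin⟩ := p.support.toFinset.exists_min_image (G.dist z) ⟨u, by simp⟩
  rw [List.mem_toFinset] at hw
  obtain ⟨q, hq, hql⟩ := (hz.trans ⟨p.takeUntil w hw⟩).exists_path_of_dist
  refine ⟨w, hw, q, hq, hql, fun a haq hap => ?_⟩
  have hsplit := congr_arg length (q.take_spec haq)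
  rw [length_append] at hsplit
  have : G.dist z a ≤ (q.takeUntil a haq).length := SimpleGraph.dist_le _
  have : G.dist z w ≤ G.dist z a := hmin a (List.mem_toFinset.2 hap)
  exact eq_of_length_eq_zero (by omega : (q.dropUntil a haq).length = 0)

end Walk

lemma Connected.exists_dist_add_dist_add_dist_le_ncard_edgeSet [Finite V] (hG : G.Connected)
    (x y z : V) : ∃ w, G.dist x w + G.dist y w + G.dist z w ≤ G.edgeSet.ncard := by
  classical
  obtain ⟨p, hp, hpl⟩ := hG.exists_path_of_dist x y
  obtain ⟨w, hw, q, hq, hql, hqp⟩ := p.exists_isPath_to_support (hG z x)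
  have hsplit := congr_arg Walk.length (p.take_spec hw)
  rw [Walk.length_append] at hsplit
  have hxw : G.dist x w ≤ (p.takeUntil w hw).length := SimpleGraph.dist_le _
  have hyw : G.dist y w ≤ (p.dropUntil w hw).length := by
    rw [← (p.dropUntil w hw).length_reverse]; exact SimpleGraph.dist_le _
  have hcount := Walk.length_add_length_le_ncard_edgeSet hp.isTrail hq.isTrail
    (Walk.disjoint_edges_of_support_inter fun a hap haq => hqp a haq hap)
  exact ⟨w, by omega⟩

lemma Connected.dist_add_dist_add_dist_le_two_mul_ncard_edgeSet [Finite V] (hG : G.Connected)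
    (x y z : V) : G.dist x y + G.dist x z + G.dist y z ≤ 2 * G.edgeSet.ncard := by
  obtain ⟨w, hw⟩ := hG.exists_dist_add_dist_add_dist_le_ncard_edgeSet x y z
  have hxy := hG.dist_triangle (u := x) (v := w) (w := y)
  have hxz := hG.dist_triangle (u := x) (v := w) (w := z)
  have hyz := hG.dist_triangle (u := y) (v := w) (w := z)
  rw [dist_comm (u := w)] at hxy hxz hyz
  omega

namespace Subgraph

lemma dist_le_dist_coe {K : G.Subgraph} {u v : K.verts} (h : K.coe.Reachable u v) :
    G.dist u v ≤ K.coe.dist u v := by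
  obtain ⟨p, hp⟩ := h.exists_walk_length_eq_dist
  rw [← hp, ← Walk.length_map K.hom]
  exact SimpleGraph.dist_le _

lemma ncard_edgeSet_coe (K : G.Subgraph) : K.coe.edgeSet.ncard = K.edgeSet.ncard := by
  rw [← K.image_coe_edgeSet_coe, Set.ncard_image_of_injective _
    (Sym2.map.injective Subtype.val_injective)]

lemma Connected.dist_add_dist_add_dist_le_two_mul_ncard_edgeSet [Finite V] {K : G.Subgraph}
    (hK : K.Connected) {x y z : V} (hx : x ∈ K.verts) (hy : y ∈ K.verts) (hz : z ∈ K.verts) :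
    G.dist x y + G.dist x z + G.dist y z ≤ 2 * K.edgeSet.ncard := by
  have hKc : K.coe.Connected := hK
  have := hKc.dist_add_dist_add_dist_le_two_mul_ncard_edgeSet ⟨x, hx⟩ ⟨y, hy⟩ ⟨z, hz⟩
  have : G.dist x y ≤ _ := dist_le_dist_coe (hKc (⟨x, hx⟩ : K.verts) ⟨y, hy⟩)
  have : G.dist x z ≤ _ := dist_le_dist_coe (hKc (⟨x, hx⟩ : K.verts) ⟨z, hz⟩)
  have : G.dist y z ≤ _ := dist_le_dist_coe (hKc (⟨y, hy⟩ : K.verts) ⟨z, hz⟩)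
  rw [ncard_edgeSet_coe] at *
  omega

end Subgraph

end SimpleGraph

section Steiner

variable {V : Type*} {G : SimpleGraph V}

lemma steinerDist_le_ncard_edgeSet {S : Set V} {K : G.Subgraph} (hK : K.Connected)
    (hS : S ⊆ K.verts) : steinerDist G S ≤ K.edgeSet.ncard :=
  Nat.sInf_le ⟨K, hK, hS, rfl⟩

lemma exists_subgraph_ncard_edgeSet_eq_steinerDist {S : Set V} {K : G.Subgraph}
    (hK : K.Connected) (hS : S ⊆ K.verts) :
    ∃ L : G.Subgraph, L.Connected ∧ S ⊆ L.verts ∧ L.edgeSet.ncard = steinerDist G S :=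
  Nat.sInf_mem (s := {n | ∃ L : G.Subgraph, L.Connected ∧ S ⊆ L.verts ∧ L.edgeSet.ncard = n})
    ⟨_, K, hK, hS, rfl⟩

lemma SimpleGraph.Connected.exists_subgraph_ncard_edgeSet_le (hG : G.Connected)
    (x y z m : V) : ∃ K : G.Subgraph, K.Connected ∧ {x, y, z} ⊆ K.verts ∧
      K.edgeSet.ncard ≤ G.dist m x + G.dist m y + G.dist m z := by
  obtain ⟨p, -, hp⟩ := hG.exists_path_of_dist m x
  obtain ⟨q, -, hq⟩ := hG.exists_path_of_dist m y
  obtain ⟨r, -, hr⟩ := hG.exists_path_of_dist m z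
  have hpq : (p.toSubgraph ⊔ q.toSubgraph).Connected := by
    refine Subgraph.connected_sup p.toSubgraph_connected.preconnected
      q.toSubgraph_connected.preconnected ?_
    exact ⟨m, p.start_mem_verts_toSubgraph, q.start_mem_verts_toSubgraph⟩
  refine ⟨p.toSubgraph ⊔ q.toSubgraph ⊔ r.toSubgraph,
    Subgraph.connected_sup hpq.preconnected r.toSubgraph_connected.preconnected ?_, ?_, ?_⟩
  · exact ⟨m, Or.inl p.start_mem_verts_toSubgraph, r.start_mem_verts_toSubgraph⟩
  · rintro v (rfl | rfl | rfl)
    · exact Or.inl (Or.inl p.end_mem_verts_toSubgraph)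
    · exact Or.inl (Or.inr q.end_mem_verts_toSubgraph)
    · exact Or.inr r.end_mem_verts_toSubgraph
  · simp only [Subgraph.edgeSet_sup, Walk.edgeSet_toSubgraph]
    grw [Set.ncard_union_le, Set.ncard_union_le, p.ncard_edgeSet_le_length,
      q.ncard_edgeSet_le_length, r.ncard_edgeSet_le_length, hp, hq, hr]

theorem IsModular.two_mul_steinerDist [Finite V] (hG : G.Connected) (hGm : IsModular G)
    (x y z : V) :
    2 * steinerDist G {x, y, z} = G.dist x y + G.dist x z + G.dist y z := by
  obtain ⟨m, ⟨hmxy, hmxz⟩, hmyz⟩ := hGm x y z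
  simp only [interval, Set.mem_ofPred_eq] at hmxy hmxz hmyz
  obtain ⟨K, hK, hS, hKm⟩ := hG.exists_subgraph_ncard_edgeSet_le x y z m
  obtain ⟨L, hL, hSL, hLS⟩ := exists_subgraph_ncard_edgeSet_eq_steinerDist hK hS
  have hupper := steinerDist_le_ncard_edgeSet hK hS
  have hlower := hL.dist_add_dist_add_dist_le_two_mul_ncard_edgeSet
    (hSL <| by simp : x ∈ L.verts) (hSL <| by simp : y ∈ L.verts) (hSL <| by simp : z ∈ L.verts)
  have := G.dist_comm (u := m) (v := x)
  have := G.dist_comm (u := m) (v := y)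
  omega

end Steiner

section Counting

variable {V M : Type*} [AddCommMonoid M]

lemma two_nsmul_sum_sym2 (s : Finset V) (f : V → V → M) (hf : ∀ u v, f u v = f v u) :
    2 • ∑ e ∈ s.sym2, Sym2.lift ⟨f, hf⟩ e = ∑ u ∈ s, ∑ v ∈ s, f u v + ∑ u ∈ s, f u u := by
  induction s using Finset.cons_induction with
  | empty => simp
  | cons a s ha ih =>
    have hsymm : ∑ u ∈ s, f u a = ∑ v ∈ s, f a v := sum_congr rfl fun u _ => hf u a
    simp only [sym2_cons, sum_disjUnion, sum_map, Sym2.mkEmbedding_apply, Sym2.lift_mk,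
      sum_cons, nsmul_add, ih, sum_add_distrib, hsymm, two_nsmul]
    abel

lemma sum_powersetCard_sum_sum [Fintype V] [DecidableEq V] {k : ℕ} (hk : 2 ≤ k)
    (f : V → V → M) (hf : ∀ v, f v v = 0) :
    ∑ S ∈ (univ : Finset V).powersetCard k, ∑ u ∈ S, ∑ v ∈ S, f u v =
      (Fintype.card V - 2).choose (k - 2) • ∑ u, ∑ v, f u v := by
  simp only [← sum_product']
  rw [sum_comm' (t' := univ ×ˢ univ)
    (s' := fun p => ((univ : Finset V).powersetCard k).filter ({p.1, p.2} ⊆ ·))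
    (fun S p => by simp [insert_subset_iff, and_comm])]
  rw [smul_sum]
  refine sum_congr rfl fun ⟨u, v⟩ _ => ?_
  rcases eq_or_ne u v with rfl | huv
  · simp [hf]
  · have hcard : #{u, v} = 2 := card_pair huv
    rw [sum_const, card_filter_powersetCard_subset _ _ _ (subset_univ _) (hcard ▸ hk), hcard,
      card_univ]

end Counting

section Wiener

variable {V : Type*} [Fintype V]

lemma two_mul_wienerIndex (G : SimpleGraph V) : 2 * wienerIndex G = ∑ u, ∑ v, G.dist u v := by
  rw [wienerIndex, ← smul_eq_mul, two_nsmul_sum_sym2]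
  simp

theorem IsModular.four_mul_steinerWiener_three_add {G : SimpleGraph V} (hG : G.Connected)
    (hGm : IsModular G) :
    4 * steinerWiener G 3 + 2 * ∑ u, ∑ v, G.dist u v =
      Fintype.card V * ∑ u, ∑ v, G.dist u v := by
  classical
  have hquad : 4 * steinerWiener G 3 =
      ∑ S ∈ (univ : Finset V).powersetCard 3, ∑ u ∈ S, ∑ v ∈ S, G.dist u v := by
    rw [steinerWiener, mul_sum]
    refine sum_congr rfl fun S hS => ?_
    obtain ⟨x, y, z, hxy, hxz, hyz, rfl⟩ := card_eq_three.mp (mem_powersetCard.mp hS).2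
    have := hGm.two_mul_steinerDist hG x y z
    have := G.dist_comm (u := x) (v := y)
    have := G.dist_comm (u := x) (v := z)
    have := G.dist_comm (u := y) (v := z)
    simp only [coe_insert, coe_singleton, sum_insert, mem_insert, mem_singleton, hxy, hxz, hyz,
      not_false_eq_true, or_self, sum_singleton, dist_self]
    omega
  rw [hquad, sum_powersetCard_sum_sum (by norm_num) _ fun _ => dist_self, smul_eq_mul,
    Nat.choose_one_right]
  rcases le_or_gt 2 (Fintype.card V) with hV | hV
  · rw [← add_mul, Nat.sub_add_cancel hV]
  · have hsub := Fintype.card_le_one_iff.mp (by omega : Fintype.card V ≤ 1)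
    have hD : ∑ u, ∑ v, G.dist u v = 0 :=
      sum_eq_zero fun u _ => sum_eq_zero fun v _ => hsub u v ▸ dist_self
    simp only [hD, mul_zero, add_zero]

end Wiener

section BoxProd

variable {α β : Type*} {G : SimpleGraph α} {H : SimpleGraph β}

lemma SimpleGraph.dist_boxProd {x y : α × β} (hG : G.Reachable x.1 y.1)
    (hH : H.Reachable x.2 y.2) : (G □ H).dist x y = G.dist x.1 y.1 + H.dist x.2 y.2 := by
  have h := (reachable_boxProd.mpr ⟨hG, hH⟩).coe_dist_eq_edist
  rw [edist_boxProd, ← hG.coe_dist_eq_edist, ← hH.coe_dist_eq_edist] at h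
  exact_mod_cast h

theorem IsModular.boxProd (hG : G.Connected) (hH : H.Connected) (hGm : IsModular G)
    (hHm : IsModular H) : IsModular (G □ H) := by
  rintro ⟨a₁, b₁⟩ ⟨a₂, b₂⟩ ⟨a₃, b₃⟩
  obtain ⟨m, ⟨hm₁₂, hm₁₃⟩, hm₂₃⟩ := hGm a₁ a₂ a₃
  obtain ⟨n, ⟨hn₁₂, hn₁₃⟩, hn₂₃⟩ := hHm b₁ b₂ b₃
  simp only [interval, Set.mem_ofPred_eq] at *
  refine ⟨(m, n), ⟨?_, ?_⟩, ?_⟩ <;>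
    simp only [Set.mem_ofPred_eq, dist_boxProd (hG _ _) (hH _ _)] <;> omega

lemma sum_sum_dist_boxProd [Fintype α] [Fintype β] (hG : G.Connected) (hH : H.Connected) :
    ∑ x, ∑ y, (G □ H).dist x y =
      Fintype.card β ^ 2 * ∑ a, ∑ b, G.dist a b + Fintype.card α ^ 2 * ∑ a, ∑ b, H.dist a b := by
  simp only [dist_boxProd (hG _ _) (hH _ _), Fintype.sum_prod_type, sum_add_distrib]
  simp only [sum_const, card_univ, smul_eq_mul, ← mul_sum]
  ring

end BoxProd

/-- For connected modular graphs `G` and `H`,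
`SW_3(G □ H) = ((|V(G)|·|V(H)| − 2)/2)·(|V(G)|²·W(H) + |V(H)|²·W(G))`. -/
theorem steinerWiener_three_boxProd_wiener {α β : Type*} (G : SimpleGraph α)
    (H : SimpleGraph β) [Fintype α] [Fintype β] (hG : G.Connected) (hH : H.Connected)
    (hGm : IsModular G) (hHm : IsModular H) :
    (steinerWiener (G.boxProd H) 3 : ℝ) =
      ((Fintype.card α : ℝ) * Fintype.card β - 2) / 2 *
        ((Fintype.card α : ℝ) ^ 2 * wienerIndex H +
          (Fintype.card β : ℝ) ^ 2 * wienerIndex G) := by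
  have h := (hGm.boxProd hG hH hHm).four_mul_steinerWiener_three_add (hG.boxProd hH)
  rw [Fintype.card_prod, sum_sum_dist_boxProd hG hH, ← two_mul_wienerIndex G,
    ← two_mul_wienerIndex H] at h
  have hℝ : (4 * steinerWiener (G □ H) 3 : ℝ) +
      2 * (Fintype.card β ^ 2 * (2 * wienerIndex G) + Fintype.card α ^ 2 * (2 * wienerIndex H)) =
      Fintype.card α * Fintype.card β *
        (Fintype.card β ^ 2 * (2 * wienerIndex G) + Fintype.card α ^ 2 * (2 * wienerIndex H)) := by
    exact_mod_cast h
  linear_combination hℝ / 4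
end

section
/- Let G be a connected graph on n vertices and let r and k be integers with 2 ≤ r ≤ k − 1 and k ≤ n. Then μ_k(G) ≤ μ_r(G) + μ_{k+1−r}(G). -/
/-- The average `k`-Steiner distance of `G`: the average of the Steiner distances of
all `k`-element subsets of vertices of `G`. -/
noncomputable def avgSteinerDist {V : Type*} (G : SimpleGraph V) [Fintype V] (k : ℕ) : ℝ :=
  (steinerWiener G k : ℝ) / ((Fintype.card V).choose k)

open Finset Equiv
open scoped BigOperators Pointwise

namespace Finset

theorem exists_perm_smul_eq_of_card_eq {α : Type*} [DecidableEq α] {S T : Finset α}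
    (h : #S = #T) : ∃ τ : Perm α, τ • T = S := by
  have := Set.powersetCard.isPretransitive (α := α) (n := #T)
  obtain ⟨τ, hτ⟩ := MulAction.exists_smul_eq (Perm α)
    (⟨T, rfl⟩ : Set.powersetCard α #T) ⟨S, h⟩
  exact ⟨τ, congrArg Subtype.val hτ⟩

theorem expect_perm_smul {α M : Type*} [Fintype α] [DecidableEq α] [AddCommMonoid M]
    [Module ℚ≥0 M] (f : Finset α → M) (T : Finset α) :
    𝔼 σ : Perm α, f (σ • T) = 𝔼 S ∈ univ.powersetCard #T, f S := by
  have hT : T ∈ univ.powersetCard #T := mem_powersetCard_univ.mpr rfl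
  have orbit_indep : ∀ S ∈ univ.powersetCard #T,
      𝔼 σ : Perm α, f (σ • S) = 𝔼 σ : Perm α, f (σ • T) := by
    intro S hS
    obtain ⟨τ, rfl⟩ := exists_perm_smul_eq_of_card_eq (mem_powersetCard_univ.mp hS)
    exact Fintype.expect_equiv (Equiv.mulRight τ) _ _ fun σ ↦ by simp [mul_smul]
  have translate_invariant : ∀ σ : Perm α,
      𝔼 S ∈ univ.powersetCard #T, f (σ • S) = 𝔼 S ∈ univ.powersetCard #T, f S :=
    fun σ ↦ expect_equiv (MulAction.toPerm σ) (by simp [card_smul_finset]) (fun _ _ ↦ rfl)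
  calc 𝔼 σ : Perm α, f (σ • T)
      = 𝔼 S ∈ univ.powersetCard #T, 𝔼 σ : Perm α, f (σ • S) := by
        rw [expect_congr rfl orbit_indep, expect_const ⟨T, hT⟩]
    _ = 𝔼 σ : Perm α, 𝔼 S ∈ univ.powersetCard #T, f (σ • S) := expect_comm ..
    _ = 𝔼 S ∈ univ.powersetCard #T, f S := by
        simp only [translate_invariant, expect_const univ_nonempty]

theorem exists_union_eq_card_eq_inter_nonempty {α : Type*} [DecidableEq α] {S : Finset α}
    {r : ℕ} (hr : 1 ≤ r) (hrS : r ≤ #S) :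
    ∃ A B : Finset α, A ∪ B = S ∧ #A = r ∧ #B = #S + 1 - r ∧ (A ∩ B).Nonempty := by
  obtain ⟨A, hAS, hA⟩ := exists_subset_card_eq hrS
  obtain ⟨v, hv⟩ := card_pos.mp (hA ▸ hr : 0 < #A)
  have hvS : v ∉ S \ A := fun h ↦ (mem_sdiff.mp h).2 hv
  refine ⟨A, insert v (S \ A), ?_, hA, ?_, v, mem_inter.mpr ⟨hv, mem_insert_self _ _⟩⟩
  · rw [union_insert, union_sdiff_of_subset hAS, insert_eq_of_mem (hAS hv)]
  · rw [card_insert_of_notMem hvS, card_sdiff_of_subset hAS, hA]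
    omega

end Finset

section Steiner

variable {V : Type*} (G : SimpleGraph V)

theorem steinerDist_le {S : Set V} {H : G.Subgraph} (hH : H.Connected) (hS : S ⊆ H.verts) :
    steinerDist G S ≤ H.edgeSet.ncard :=
  Nat.sInf_le ⟨H, hH, hS, rfl⟩

theorem exists_subgraph_steinerDist {S : Set V}
    (h : ∃ H : G.Subgraph, H.Connected ∧ S ⊆ H.verts) :
    ∃ H : G.Subgraph, H.Connected ∧ S ⊆ H.verts ∧ H.edgeSet.ncard = steinerDist G S := by
  obtain ⟨H, hH, hS⟩ := h
  exact Nat.sInf_mem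
    (s := {n | ∃ H : G.Subgraph, H.Connected ∧ S ⊆ H.verts ∧ H.edgeSet.ncard = n})
    ⟨_, H, hH, hS, rfl⟩

theorem steinerDist_union_le {A B : Set V} (hAB : (A ∩ B).Nonempty) :
    steinerDist G (A ∪ B) ≤ steinerDist G A + steinerDist G B := by
  by_cases hfeas : ∃ H : G.Subgraph, H.Connected ∧ A ∪ B ⊆ H.verts
  swap
  -- `steinerDist` takes the junk value `sInf ∅ = 0` on sets no connected subgraph contains.
  · push Not at hfeas
    refine (Nat.sInf_eq_zero.mpr (Or.inr ?_)).trans_le (Nat.zero_le _)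
    exact Set.eq_empty_of_forall_notMem fun n ⟨H, hH, hS, _⟩ ↦ hfeas H hH hS
  obtain ⟨H, hH, hS⟩ := hfeas
  obtain ⟨HA, hHA, hA, hAe⟩ := exists_subgraph_steinerDist G
    ⟨H, hH, Set.subset_union_left.trans hS⟩
  obtain ⟨HB, hHB, hB, hBe⟩ := exists_subgraph_steinerDist G
    ⟨H, hH, Set.subset_union_right.trans hS⟩
  obtain ⟨v, hvA, hvB⟩ := hAB
  have hconn : (HA ⊔ HB).Connected :=
    SimpleGraph.Subgraph.connected_sup hHA.preconnected hHB.preconnected ⟨v, hA hvA, hB hvB⟩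
  calc steinerDist G (A ∪ B) ≤ (HA ⊔ HB).edgeSet.ncard :=
        steinerDist_le G hconn (Set.union_subset_union hA hB)
    _ ≤ HA.edgeSet.ncard + HB.edgeSet.ncard := by
        rw [SimpleGraph.Subgraph.edgeSet_sup]; exact Set.ncard_union_le _ _
    _ = steinerDist G A + steinerDist G B := by rw [hAe, hBe]

variable [Fintype V]

theorem avgSteinerDist_eq_expect (k : ℕ) :
    avgSteinerDist G k =
      𝔼 S ∈ univ.powersetCard k, (steinerDist G ((S : Finset V) : Set V) : ℝ) := by
  rw [avgSteinerDist, steinerWiener, expect_eq_sum_div_card, card_powersetCard, card_univ]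
  push_cast
  rfl

theorem avgSteinerDist_card_eq_expect_perm [DecidableEq V] (T : Finset V) :
    avgSteinerDist G #T = 𝔼 σ : Perm V, (steinerDist G ↑(σ • T) : ℝ) := by
  rw [avgSteinerDist_eq_expect]
  exact (expect_perm_smul (fun S : Finset V ↦ (steinerDist G S : ℝ)) T).symm

end Steiner

theorem avgSteinerDist_le_add_general {V : Type*} (G : SimpleGraph V) [Fintype V]
    (r k : ℕ) (hr : 2 ≤ r) (hrk : r ≤ k - 1)
    (hk : k ≤ Fintype.card V) :
    avgSteinerDist G k ≤ avgSteinerDist G r + avgSteinerDist G (k + 1 - r) := by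
  classical
  obtain ⟨S, -, hS⟩ := exists_subset_card_eq (hk.trans_eq card_univ.symm)
  obtain ⟨A, B, rfl, hA, hB, v, hv⟩ :=
    exists_union_eq_card_eq_inter_nonempty (S := S) (r := r) (by omega) (by omega)
  rw [← hS, ← hB, ← hA, avgSteinerDist_card_eq_expect_perm,
    avgSteinerDist_card_eq_expect_perm, avgSteinerDist_card_eq_expect_perm,
    ← expect_add_distrib]
  refine expect_le_expect fun σ _ ↦ ?_
  obtain ⟨hvA, hvB⟩ := mem_inter.mp hv
  have hσv : σ • v ∈ ((σ • A : Finset V) : Set V) ∩ ↑(σ • B) :=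
    ⟨mem_coe.mpr (smul_mem_smul_finset hvA), mem_coe.mpr (smul_mem_smul_finset hvB)⟩
  rw [smul_finset_union, coe_union]
  exact_mod_cast steinerDist_union_le G ⟨_, hσv⟩

/-- For a connected graph `G` on `n` vertices and integers `2 ≤ r ≤ k − 1` with
`k ≤ n`, the average Steiner distances satisfy `μ_k(G) ≤ μ_r(G) + μ_{k+1−r}(G)`. -/
theorem avgSteinerDist_le_add {V : Type*} (G : SimpleGraph V) [Fintype V]
    (hG : G.Connected) (r k : ℕ) (hr : 2 ≤ r) (hrk : r ≤ k - 1)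
    (hk : k ≤ Fintype.card V) :
    avgSteinerDist G k ≤ avgSteinerDist G r + avgSteinerDist G (k + 1 - r) :=
  avgSteinerDist_le_add_general G r k hr hrk hk
end

section
/- For any integer n ≥ 1, the Steiner 3-Wiener index of the Lucas cube satisfies SW_3(Λ_n) = (n/2) · F_{n−1} · F_{n+1} · (L_n − 2). -/
/-- The `n`-dimensional hypercube `Q_n`: vertices are binary strings of length `n`,
two strings being adjacent iff they differ in exactly one position. -/
def hypercube (n : ℕ) : SimpleGraph (Fin n → Bool) where
  Adj a b := (Finset.univ.filter fun i => a i ≠ b i).card = 1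
  symm := by
    constructor
    intro a b h
    have hc : (Finset.univ.filter fun i => b i ≠ a i) =
        (Finset.univ.filter fun i => a i ≠ b i) := by
      apply Finset.filter_congr
      intro i _
      simp [ne_comm]
    rw [hc]
    exact h
  loopless := by
    constructor
    intro a h
    simp at h

/-- A Fibonacci string of length `n`: a binary string with no two consecutive ones. -/
def fibWord (n : ℕ) (b : Fin n → Bool) : Prop :=
  ∀ i j : Fin n, (j : ℕ) = (i : ℕ) + 1 → ¬(b i = true ∧ b j = true)

instance (n : ℕ) : DecidablePred (fibWord n) := fun b =>
  inferInstanceAs (Decidable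
    (∀ i j : Fin n, (j : ℕ) = (i : ℕ) + 1 → ¬(b i = true ∧ b j = true)))

/-- The Fibonacci cube `Γ_n`: the subgraph of the hypercube `Q_n` induced by the
Fibonacci strings of length `n`. -/
def fibonacciCube (n : ℕ) : SimpleGraph {b : Fin n → Bool // fibWord n b} :=
  (hypercube n).comap Subtype.val
/-- A Lucas string of length `n`: a Fibonacci string whose first and last entries are
not both one. -/
def lucasWord (n : ℕ) (b : Fin n → Bool) : Prop :=
  fibWord n b ∧
    ∀ i j : Fin n, (i : ℕ) = 0 → (j : ℕ) = n - 1 → ¬(b i = true ∧ b j = true)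

instance (n : ℕ) : DecidablePred (lucasWord n) := fun b =>
  inferInstanceAs (Decidable (fibWord n b ∧
    ∀ i j : Fin n, (i : ℕ) = 0 → (j : ℕ) = n - 1 → ¬(b i = true ∧ b j = true)))

/-- The Lucas cube `Λ_n`: the subgraph of the hypercube `Q_n` induced by the Lucas
strings of length `n`. -/
def lucasCube (n : ℕ) : SimpleGraph {b : Fin n → Bool // lucasWord n b} :=
  (hypercube n).comap Subtype.val

/-- The Lucas numbers: `L_0 = 2`, `L_1 = 1`, `L_n = L_{n-1} + L_{n-2}`. -/
def lucasNum : ℕ → ℕ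
  | 0 => 2
  | 1 => 1
  | n + 2 => lucasNum (n + 1) + lucasNum n

/-!
`Λ_n` is a median graph: it is a lower set of `Q_n` (so Hamming distances are realised by
walks inside it) and it is closed under bitwise majority. Hence the Steiner distance of three
vertices is the number of coordinates on which they are not all equal, i.e. half the perimeter
`(d(u,v) + d(u,w) + d(v,w)) / 2`: the walks from `u, v, w` to their majority give the upper
bound, and each such coordinate must be flipped by some edge of any connecting subgraph. Summing
over triples gives `SW_3 = (|Λ_n| - 2) / 4 · ∑_{x,y} d(x,y)`, and the double sum splits over
coordinates as `∑_i 2 a_i (|Λ_n| - a_i)`, where by rotational symmetry `a_i = F_{n-1}` words have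
a one in position `i`, while `|Λ_n| = L_n = F_{n+1} + F_{n-1}`.
-/

open Finset SimpleGraph

section Hamming

variable {ι : Type*}

def nonconstantCoords [Fintype ι] {β : Type*} [DecidableEq β] (u v w : ι → β) : Finset ι :=
  {i | ¬(u i = v i ∧ v i = w i)}

/-- The median of three vertices of the hypercube. -/
def majority (u v w : ι → Bool) (i : ι) : Bool :=
  u i && v i || u i && w i || v i && w i

lemma not_and_majority {u v w : ι → Bool} {i j : ι} (hu : ¬(u i = true ∧ u j = true))
    (hv : ¬(v i = true ∧ v j = true)) (hw : ¬(w i = true ∧ w j = true)) :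
    ¬(majority u v w i = true ∧ majority u v w j = true) := by
  unfold majority
  revert hu hv hw
  cases u i <;> cases u j <;> cases v i <;> cases v j <;> cases w i <;> cases w j <;> decide

variable [Fintype ι]

lemma hammingDist_eq_sum_ite {β : Type*} [DecidableEq β] (x y : ι → β) :
    hammingDist x y = ∑ i, if x i ≠ y i then 1 else 0 :=
  card_filter _ _

lemma card_nonconstantCoords_eq_sum_ite {β : Type*} [DecidableEq β] (u v w : ι → β) :
    #(nonconstantCoords u v w) = ∑ i, if ¬(u i = v i ∧ v i = w i) then 1 else 0 :=
  card_filter _ _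

theorem hammingDist_add_hammingDist_add_hammingDist (u v w : ι → Bool) :
    hammingDist u v + hammingDist u w + hammingDist v w = 2 * #(nonconstantCoords u v w) := by
  simp only [hammingDist_eq_sum_ite, card_nonconstantCoords_eq_sum_ite, ← sum_add_distrib,
    mul_sum]
  exact sum_congr rfl fun i _ => by cases u i <;> cases v i <;> cases w i <;> rfl

theorem hammingDist_majority_add (u v w : ι → Bool) :
    hammingDist u (majority u v w) + hammingDist v (majority u v w) +
      hammingDist w (majority u v w) = #(nonconstantCoords u v w) := by
  simp only [hammingDist_eq_sum_ite, card_nonconstantCoords_eq_sum_ite, ← sum_add_distrib]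
  refine sum_congr rfl fun i _ => ?_
  unfold majority
  generalize u i = a; generalize v i = b; generalize w i = c
  revert a b c
  decide

lemma sum_sum_ite_ne {α : Type*} (s : Finset α) (g : α → Bool) :
    ∑ x ∈ s, ∑ y ∈ s, (if g x ≠ g y then 1 else 0) =
      2 * #{x ∈ s | g x = true} * #{x ∈ s | g x = false} := by
  simp only [← card_filter]
  rw [← sum_filter_add_sum_filter_not s (fun x => g x = true)]
  have h₁ : ∀ x ∈ s.filter (g · = true), #{y ∈ s | g x ≠ g y} = #{y ∈ s | g y = false} :=
    fun x hx => by
      rw [(mem_filter.1 hx).2]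
      exact congrArg card (filter_congr fun y _ => by cases g y <;> decide)
  have h₂ : ∀ x ∈ s.filter (¬g · = true), #{y ∈ s | g x ≠ g y} = #{y ∈ s | g y = true} :=
    fun x hx => by
      rw [Bool.not_eq_true _ |>.mp (mem_filter.1 hx).2]
      exact congrArg card (filter_congr fun y _ => by cases g y <;> decide)
  rw [sum_congr rfl h₁, sum_congr rfl h₂, sum_const, sum_const, smul_eq_mul, smul_eq_mul]
  simp only [Bool.not_eq_true]
  ring

theorem sum_sum_hammingDist (s : Finset (ι → Bool)) :
    ∑ x ∈ s, ∑ y ∈ s, hammingDist x y =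
      ∑ i, 2 * #{x ∈ s | x i = true} * #{x ∈ s | x i = false} := by
  simp only [hammingDist_eq_sum_ite, ← sum_sum_ite_ne s]
  calc _ = ∑ x ∈ s, ∑ i, ∑ y ∈ s, (if x i ≠ y i then 1 else 0) :=
        sum_congr rfl fun x _ => sum_comm
    _ = _ := sum_comm

variable [DecidableEq ι] {β : Type*} [DecidableEq β]

lemma hammingDist_update_self {x : ι → β} {i : ι} {a : β} (h : x i ≠ a) :
    hammingDist x (Function.update x i a) = 1 := by
  rw [hammingDist, card_eq_one]
  exact ⟨i, by ext j; by_cases hj : j = i <;> simp [hj, h]⟩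

lemma hammingDist_update_add_one {x y : ι → β} {i : ι} (h : x i ≠ y i) :
    hammingDist (Function.update x i (y i)) y + 1 = hammingDist x y := by
  rw [hammingDist, hammingDist, ← card_erase_add_one (s := {j | x j ≠ y j}) (a := i) (by simpa)]
  congr 2
  ext j
  by_cases hj : j = i <;> simp [hj]

end Hamming

lemma card_powersetCard_three_filter_mem_mem {α : Type*} [DecidableEq α] {s : Finset α}
    {x y : α} (hx : x ∈ s) (hy : y ∈ s) (hxy : x ≠ y) :
    #{t ∈ s.powersetCard 3 | x ∈ t ∧ y ∈ t} = #s - 2 := by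
  have := card_filter_powersetCard_subset {x, y} s 3 (by simp [insert_subset_iff, hx, hy])
    (by rw [card_pair hxy]; omega)
  rw [card_pair hxy, Nat.choose_one_right] at this
  rw [← this]
  congr 2
  ext t
  simp [insert_subset_iff]

theorem sum_powersetCard_three_sum_sum {α M : Type*} [DecidableEq α] [AddCommMonoid M]
    (s : Finset α) (f : α → α → M) (hf : ∀ x, f x x = 0) :
    ∑ t ∈ s.powersetCard 3, ∑ x ∈ t, ∑ y ∈ t, f x y = (#s - 2) • ∑ x ∈ s, ∑ y ∈ s, f x y := by
  have hsub : ∀ {t}, t ∈ s.powersetCard 3 → t ⊆ s := fun ht => (mem_powersetCard.1 ht).1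
  rw [sum_comm' (t' := s) (s' := fun x => {t ∈ s.powersetCard 3 | x ∈ t})
    (fun t x => by simp only [mem_filter]; exact ⟨fun h => ⟨h, hsub h.1 h.2⟩, fun h => h.1⟩),
    smul_sum]
  refine sum_congr rfl fun x hx => ?_
  rw [sum_comm' (t' := s) (s' := fun y => {t ∈ s.powersetCard 3 | x ∈ t ∧ y ∈ t})
    (fun t y => by
      simp only [mem_filter]
      exact ⟨fun h => ⟨⟨h.1.1, h.1.2, h.2⟩, hsub h.1.1 h.2⟩,
        fun h => ⟨⟨h.1.1, h.1.2.1⟩, h.1.2.2⟩⟩),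
    smul_sum]
  refine sum_congr rfl fun y hy => ?_
  rw [sum_const]
  obtain rfl | hxy := eq_or_ne x y
  · simp [hf]
  · rw [card_powersetCard_three_filter_mem_mem hx hy hxy]

namespace SimpleGraph

variable {V : Type*} {G : SimpleGraph V}

theorem Walk.ncard_edgeSet_le_length_s15 {u v : V} (p : G.Walk u v) :
    p.edgeSet.ncard ≤ p.length := by
  induction p with
  | nil => simp
  | cons h p ih =>
    rw [Walk.edgeSet_cons, Walk.length_cons]
    exact (Set.ncard_insert_le _ _).trans (by omega)

theorem exists_connected_subgraph_of_walks {x u v w : V} (p₁ : G.Walk u x) (p₂ : G.Walk v x)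
    (p₃ : G.Walk w x) :
    ∃ H : G.Subgraph, H.Connected ∧ {u, v, w} ⊆ H.verts ∧
      H.edgeSet.ncard ≤ p₁.length + p₂.length + p₃.length := by
  refine ⟨p₁.toSubgraph ⊔ p₂.toSubgraph ⊔ p₃.toSubgraph, ?_, ?_, ?_⟩
  · refine Subgraph.connected_sup (Subgraph.connected_sup p₁.toSubgraph_connected.preconnected
      p₂.toSubgraph_connected.preconnected ⟨x, ?_, ?_⟩).preconnected
      p₃.toSubgraph_connected.preconnected ⟨x, ?_, ?_⟩ <;> simp
  · simp [Set.insert_subset_iff]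
  · simp only [Subgraph.edgeSet_sup, Walk.edgeSet_toSubgraph]
    grw [Set.ncard_union_le, Set.ncard_union_le, p₁.ncard_edgeSet_le_length_s15,
      p₂.ncard_edgeSet_le_length_s15, p₃.ncard_edgeSet_le_length_s15]

lemma Subgraph.Connected.exists_adj_ne {β : Type*} {H : G.Subgraph} (hH : H.Connected)
    (g : V → β) {a b : V} (ha : a ∈ H.verts) (hb : b ∈ H.verts) (hab : g a ≠ g b) :
    ∃ p q, H.Adj p q ∧ g p ≠ g q := by
  obtain ⟨w⟩ := hH ⟨a, ha⟩ ⟨b, hb⟩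
  obtain ⟨d, -, hd, hd'⟩ := w.exists_boundary_dart {x | g x = g a} rfl (Ne.symm hab)
  exact ⟨d.fst, d.snd, d.adj, fun h => hd' (h.symm.trans hd)⟩

end SimpleGraph

section Steiner

variable {V : Type*} {G : SimpleGraph V}

theorem steinerDist_eq_of_le {S : Set V} {k : ℕ} {H₀ : G.Subgraph} (hH₀ : H₀.Connected)
    (hS₀ : S ⊆ H₀.verts) (hk : H₀.edgeSet.ncard ≤ k)
    (h : ∀ H : G.Subgraph, H.Connected → S ⊆ H.verts → k ≤ H.edgeSet.ncard) :
    steinerDist G S = k := by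
  unfold steinerDist
  refine le_antisymm (le_trans (Nat.sInf_le ⟨H₀, hH₀, hS₀, rfl⟩) hk) ?_
  refine le_csInf ⟨_, H₀, hH₀, hS₀, rfl⟩ ?_
  rintro _ ⟨H, hH, hS, rfl⟩
  exact h H hH hS

theorem card_nonconstantCoords_le_ncard_edgeSet [Finite V] {ι β : Type*} [Fintype ι]
    [DecidableEq β] {f : V → ι → β} (hf : ∀ p q, G.Adj p q → hammingDist (f p) (f q) = 1)
    {H : G.Subgraph} (hH : H.Connected) {u v w : V} (hu : u ∈ H.verts) (hv : v ∈ H.verts)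
    (hw : w ∈ H.verts) :
    #(nonconstantCoords (f u) (f v) (f w)) ≤ H.edgeSet.ncard := by
  classical
  have hfin : H.edgeSet.Finite := Set.toFinite _
  let flips : Sym2 V → Finset ι :=
    Sym2.lift ⟨fun p q => {i | f p i ≠ f q i}, fun p q => by simp only [ne_comm]⟩
  have hcover : nonconstantCoords (f u) (f v) (f w) ⊆ hfin.toFinset.biUnion flips := by
    intro i hi
    obtain ⟨p, q, hpq, hi⟩ : ∃ p q, H.Adj p q ∧ f p i ≠ f q i := by
      by_cases huv : f u i = f v i
      · exact hH.exists_adj_ne (f · i) hv hw fun h => (mem_filter.1 hi).2 ⟨huv, h⟩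
      · exact hH.exists_adj_ne (f · i) hu hv huv
    exact mem_biUnion.2 ⟨s(p, q), by simpa using hpq, by simpa [flips] using hi⟩
  have hflips : ∀ e ∈ hfin.toFinset, #(flips e) ≤ 1 := by
    intro e he
    induction e with
    | h p q => exact (hf p q (H.adj_sub (by simpa using he))).le
  calc #(nonconstantCoords (f u) (f v) (f w)) ≤ #(hfin.toFinset.biUnion flips) :=
        card_le_card hcover
    _ ≤ #hfin.toFinset * 1 := card_biUnion_le_card_mul _ _ _ hflips
    _ = H.edgeSet.ncard := by rw [mul_one, Set.ncard_eq_toFinset_card _ hfin]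

variable [Fintype V]

theorem four_mul_steinerWiener_three (G : SimpleGraph V) (d : V → V → ℕ)
    (hd_self : ∀ x, d x x = 0) (hd_comm : ∀ x y, d x y = d y x)
    (hd : ∀ u v w, u ≠ v → u ≠ w → v ≠ w →
      2 * steinerDist G {u, v, w} = d u v + d u w + d v w) :
    4 * steinerWiener G 3 = (Fintype.card V - 2) * ∑ x, ∑ y, d x y := by
  classical
  rw [steinerWiener, mul_sum, ← card_univ, ← smul_eq_mul,
    ← sum_powersetCard_three_sum_sum _ _ hd_self]
  refine sum_congr rfl fun S hS => ?_
  obtain ⟨u, v, w, huv, huw, hvw, rfl⟩ := card_eq_three.1 (mem_powersetCard.1 hS).2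
  have h₁ : u ∉ ({v, w} : Finset V) := by simp [huv, huw]
  have h₂ : v ∉ ({w} : Finset V) := by simp [hvw]
  have := hd u v w huv huw hvw
  simp only [coe_insert, coe_singleton, sum_insert h₁, sum_insert h₂, sum_singleton, hd_self,
    hd_comm v u, hd_comm w u, hd_comm w v] at this ⊢
  omega

lemma steinerWiener_eq_zero_of_card_lt (G : SimpleGraph V) {k : ℕ} (h : Fintype.card V < k) :
    steinerWiener G k = 0 := by
  rw [steinerWiener, powersetCard_eq_empty.2 (by simpa using h), sum_empty]

end Steiner

section LowerSetOfHypercube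

variable {n : ℕ} {P : (Fin n → Bool) → Prop}

lemma hypercube_adj_iff {a b : Fin n → Bool} : (hypercube n).Adj a b ↔ hammingDist a b = 1 :=
  Iff.rfl

lemma exists_adj_hammingDist_add_one (hP : IsLowerSet {b | P b}) {x y : Subtype P}
    (hxy : x ≠ y) :
    ∃ z, ((hypercube n).comap Subtype.val).Adj x z ∧
      hammingDist z.1 y.1 + 1 = hammingDist x.1 y.1 := by
  -- Flip a coordinate where `x` and `y` differ so that the result lies below `x` or below `y`.
  obtain ⟨i, hi, hz⟩ : ∃ i, x.1 i ≠ y.1 i ∧ P (Function.update x.1 i (y.1 i)) := by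
    by_cases hle : x.1 ≤ y.1
    · obtain ⟨i, hi⟩ := Function.ne_iff.1 (Subtype.coe_injective.ne hxy)
      exact ⟨i, hi, hP (update_le_iff.2 ⟨le_rfl, fun j _ => hle j⟩) y.2⟩
    · obtain ⟨i, hi⟩ := not_forall.1 hle
      exact ⟨i, ne_of_not_le hi, hP (update_le_iff.2 ⟨le_of_not_ge hi, fun j _ => le_rfl⟩) x.2⟩
  exact ⟨⟨_, hz⟩, hypercube_adj_iff.2 (hammingDist_update_self hi), hammingDist_update_add_one hi⟩

theorem exists_walk_length_eq_hammingDist (hP : IsLowerSet {b | P b}) (x y : Subtype P) :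
    ∃ p : ((hypercube n).comap Subtype.val).Walk x y, p.length = hammingDist x.1 y.1 := by
  induction hd : hammingDist x.1 y.1 generalizing x with
  | zero =>
    obtain rfl : x = y := Subtype.ext (hammingDist_eq_zero.1 hd)
    exact ⟨.nil, rfl⟩
  | succ d ih =>
    obtain ⟨z, hxz, hz⟩ := exists_adj_hammingDist_add_one hP (x := x) (y := y)
      (by rintro rfl; simp at hd)
    obtain ⟨p, hp⟩ := ih z (by omega)
    exact ⟨.cons hxz p, by simp [hp]⟩

theorem steinerDist_eq_card_nonconstantCoords (hP : IsLowerSet {b | P b})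
    (hmaj : ∀ u v w, P u → P v → P w → P (majority u v w)) (u v w : Subtype P) :
    steinerDist ((hypercube n).comap Subtype.val) {u, v, w} =
      #(nonconstantCoords u.1 v.1 w.1) := by
  let m : Subtype P := ⟨majority u.1 v.1 w.1, hmaj _ _ _ u.2 v.2 w.2⟩
  obtain ⟨p₁, hp₁⟩ := exists_walk_length_eq_hammingDist hP u m
  obtain ⟨p₂, hp₂⟩ := exists_walk_length_eq_hammingDist hP v m
  obtain ⟨p₃, hp₃⟩ := exists_walk_length_eq_hammingDist hP w m
  obtain ⟨H, hH, hS, hE⟩ := exists_connected_subgraph_of_walks p₁ p₂ p₃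
  refine steinerDist_eq_of_le hH hS ?_ fun H' hH' hS' =>
    card_nonconstantCoords_le_ncard_edgeSet (f := Subtype.val) (fun _ _ => hypercube_adj_iff.1)
      hH' (hS' (by simp)) (hS' (by simp)) (hS' (by simp))
  rwa [← hammingDist_majority_add, ← hp₁, ← hp₂, ← hp₃]

end LowerSetOfHypercube

section FibonacciWords

variable {k : ℕ}

lemma card_filter_fin_cons (P : (Fin (k + 1) → Bool) → Prop) [DecidablePred P] :
    #{b | P b} = #{c | P (Fin.cons false c)} + #{c | P (Fin.cons true c)} := by
  simp only [card_filter]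
  rw [← (Fin.consEquiv fun _ => Bool).sum_comp, Fintype.sum_prod_type, Fintype.sum_bool,
    add_comm]
  rfl

lemma fibWord_cons_false (c : Fin k → Bool) :
    fibWord (k + 1) (Fin.cons false c) ↔ fibWord k c := by
  refine ⟨fun h i j hij hc => h i.succ j.succ (by simp [hij]) (by simpa using hc), ?_⟩
  intro h i j hij hc
  induction i using Fin.cases with
  | zero => simp at hc
  | succ i =>
    induction j using Fin.cases with
    | zero => simp at hij
    | succ j => exact h i j (by simpa using hij) (by simpa using hc)

lemma fibWord_cons_true (c : Fin (k + 1) → Bool) :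
    fibWord (k + 2) (Fin.cons true c) ↔ fibWord (k + 1) c ∧ c 0 = false := by
  refine ⟨fun h => ⟨fun i j hij hc => h i.succ j.succ (by simp [hij]) (by simpa using hc),
    by simpa using h 0 1 (by simp)⟩, ?_⟩
  rintro ⟨h, h0⟩ i j hij hc
  induction i using Fin.cases with
  | zero =>
    obtain rfl : j = 1 := Fin.ext (by simpa using hij)
    simp [h0] at hc
  | succ i =>
    induction j using Fin.cases with
    | zero => simp at hij
    | succ j => exact h i j (by simpa using hij) (by simpa using hc)

lemma card_fibWord_head_false (k : ℕ) :
    #{c : Fin (k + 1) → Bool | fibWord (k + 1) c ∧ c 0 = false} = #{c | fibWord k c} := by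
  simp [card_filter_fin_cons, fibWord_cons_false]

theorem card_fibWord : ∀ k, #{c : Fin k → Bool | fibWord k c} = Nat.fib (k + 2)
  | 0 => rfl
  | 1 => rfl
  | k + 2 => by
    rw [card_filter_fin_cons]
    simp only [fibWord_cons_false, fibWord_cons_true, card_fibWord_head_false, card_fibWord]
    rw [Nat.fib_add_two (n := k + 2), add_comm]

lemma card_fibWord_head_true (k : ℕ) :
    #{c : Fin (k + 1) → Bool | fibWord (k + 1) c ∧ c 0 = true} = Nat.fib (k + 1) := by
  have := card_filter_add_card_filter_not (s := {c : Fin (k + 1) → Bool | fibWord (k + 1) c})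
    (p := fun c => c 0 = true)
  simp only [filter_filter, Bool.not_eq_true, card_fibWord_head_false, card_fibWord] at this
  linarith [Nat.fib_add_two (n := k + 1)]

end FibonacciWords

section LucasWords

variable {k : ℕ}

lemma lucasWord_cons_false (c : Fin k → Bool) :
    lucasWord (k + 1) (Fin.cons false c) ↔ fibWord k c := by
  rw [lucasWord, fibWord_cons_false, and_iff_left_iff_imp]
  intro _ i j hi _ hc
  obtain rfl : i = 0 := Fin.ext hi
  simp at hc

lemma lucasWord_iff_forall_add_one (b : Fin (k + 1) → Bool) :
    lucasWord (k + 1) b ↔ ∀ i : Fin (k + 1), ¬(b i = true ∧ b (i + 1) = true) := by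
  refine ⟨fun ⟨hfib, hends⟩ i => ?_, fun h => ⟨fun i j hij => ?_, fun i j hi hj hc => ?_⟩⟩
  · rcases eq_or_ne i (Fin.last k) with rfl | hi
    · rw [Fin.last_add_one]
      exact fun hc => hends 0 (Fin.last k) rfl rfl hc.symm
    · exact hfib i (i + 1) (by simp [Fin.val_add_one, hi])
  · obtain rfl : j = i + 1 := Fin.ext <| by
      rw [Fin.val_add_one_of_lt (Fin.lt_last_iff_ne_last.2 fun h => by simp [h] at hij; omega), hij]
    exact h i
  · obtain rfl : i = 0 := Fin.ext hi
    obtain rfl : j = Fin.last k := Fin.ext (by simpa using hj)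
    exact h (Fin.last k) (by rw [Fin.last_add_one]; exact hc.symm)

lemma lucasWord_comp_add_right {b : Fin (k + 1) → Bool} (h : lucasWord (k + 1) b)
    (r : Fin (k + 1)) :
    lucasWord (k + 1) (fun t => b (t + r)) := by
  rw [lucasWord_iff_forall_add_one] at h ⊢
  intro i
  rw [add_right_comm]
  exact h (i + r)

lemma card_lucasWord_apply_eq (i j : Fin (k + 1)) (x : Bool) :
    #{b | lucasWord (k + 1) b ∧ b i = x} = #{b | lucasWord (k + 1) b ∧ b j = x} := by
  refine card_nbij' (fun b t => b (t + (i - j))) (fun b t => b (t + (j - i))) ?_ ?_ ?_ ?_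
  · intro b hb
    simp only [mem_coe, mem_filter, mem_univ, true_and] at hb ⊢
    exact ⟨lucasWord_comp_add_right hb.1 _, by rw [add_sub_cancel]; exact hb.2⟩
  · intro b hb
    simp only [mem_coe, mem_filter, mem_univ, true_and] at hb ⊢
    exact ⟨lucasWord_comp_add_right hb.1 _, by rw [add_sub_cancel]; exact hb.2⟩
  · intro b _; funext t; simp only [add_assoc, sub_add_sub_cancel, sub_self, add_zero]
  · intro b _; funext t; simp only [add_assoc, sub_add_sub_cancel, sub_self, add_zero]

lemma card_lucasWord_apply_false (i : Fin (k + 1)) :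
    #{b | lucasWord (k + 1) b ∧ b i = false} = Nat.fib (k + 2) := by
  rw [card_lucasWord_apply_eq i 0, card_filter_fin_cons]
  simp [lucasWord_cons_false, card_fibWord]

lemma card_lucasWord_apply_true (i : Fin (k + 2)) :
    #{b | lucasWord (k + 2) b ∧ b i = true} = Nat.fib (k + 1) := by
  -- With a one in position `1`, `b 0 = 0` and `b` is `0` followed by a Fibonacci word `1 ⋯`.
  rw [card_lucasWord_apply_eq i 1, card_filter_fin_cons]
  have : ∀ c : Fin (k + 1) → Bool, ¬(lucasWord (k + 2) (Fin.cons true c) ∧ c 0 = true) :=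
    fun c ⟨h, h0⟩ => by simpa [h0] using ((fibWord_cons_true c).1 h.1).2
  simp [lucasWord_cons_false, this, card_fibWord_head_true]

theorem lucasNum_succ : ∀ k, lucasNum (k + 1) = Nat.fib (k + 2) + Nat.fib k
  | 0 => rfl
  | 1 => rfl
  | k + 2 => by
    rw [lucasNum, lucasNum_succ (k + 1), lucasNum_succ k]
    simp only [Nat.fib_add_two]
    ring

theorem card_lucasWord (k : ℕ) :
    #{b : Fin (k + 2) → Bool | lucasWord (k + 2) b} = lucasNum (k + 2) := by
  rw [← card_filter_add_card_filter_not (p := fun b : Fin (k + 2) → Bool => b 0 = true)]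
  simp only [filter_filter, Bool.not_eq_true, card_lucasWord_apply_true,
    card_lucasWord_apply_false, lucasNum_succ]
  ring

end LucasWords

section LucasCube

lemma isLowerSet_setOf_lucasWord (n : ℕ) : IsLowerSet {b | lucasWord n b} := by
  rintro b c hcb ⟨hfib, hends⟩
  exact ⟨fun i j hij hc => hfib i j hij ⟨hcb i hc.1, hcb j hc.2⟩,
    fun i j hi hj hc => hends i j hi hj ⟨hcb i hc.1, hcb j hc.2⟩⟩

lemma lucasWord_majority {n : ℕ} {u v w : Fin n → Bool} (hu : lucasWord n u)
    (hv : lucasWord n v) (hw : lucasWord n w) : lucasWord n (majority u v w) :=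
  ⟨fun i j hij => not_and_majority (hu.1 i j hij) (hv.1 i j hij) (hw.1 i j hij),
    fun i j hi hj => not_and_majority (hu.2 i j hi hj) (hv.2 i j hi hj) (hw.2 i j hi hj)⟩

theorem four_mul_steinerWiener_lucasCube (k : ℕ) :
    4 * steinerWiener (lucasCube (k + 2)) 3 =
      (lucasNum (k + 2) - 2) * ((k + 2) * (2 * Nat.fib (k + 1) * Nat.fib (k + 3))) := by
  classical
  rw [lucasCube, four_mul_steinerWiener_three _ (fun x y => hammingDist x.1 y.1)
    (fun _ => hammingDist_self _) (fun _ _ => hammingDist_comm _ _) fun u v w _ _ _ => by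
      rw [steinerDist_eq_card_nonconstantCoords (isLowerSet_setOf_lucasWord _)
        (fun _ _ _ => lucasWord_majority), hammingDist_add_hammingDist_add_hammingDist],
    Fintype.card_subtype, card_lucasWord]
  congr 1
  have hsum (f : (Fin (k + 2) → Bool) → ℕ) :
      ∑ y : Subtype (lucasWord (k + 2)), f y.1 = ∑ y with lucasWord (k + 2) y, f y :=
    (sum_subtype _ (fun _ => mem_filter_univ _) f).symm
  rw [hsum (∑ y : Subtype (lucasWord (k + 2)), hammingDist · y.1)]
  simp only [hsum, sum_sum_hammingDist, filter_filter, card_lucasWord_apply_true,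
    card_lucasWord_apply_false, sum_const, card_univ, Fintype.card_fin, smul_eq_mul]

end LucasCube

theorem steinerWiener_three_lucasCube_general (n : ℕ) :
    (steinerWiener (lucasCube n) 3 : ℝ) =
      ((n : ℝ) / 2) * (Nat.fib (n - 1) : ℝ) * (Nat.fib (n + 1) : ℝ) *
        ((lucasNum n : ℝ) - 2) := by
  rcases lt_or_ge n 2 with hn | hn
  · have hV : Fintype.card {b // lucasWord n b} < 3 :=
      (Fintype.card_subtype_le _).trans_lt (by interval_cases n <;> simp)
    rw [steinerWiener_eq_zero_of_card_lt _ hV]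
    interval_cases n <;> simp
  · obtain ⟨k, rfl⟩ := Nat.exists_eq_add_of_le' hn
    have key := four_mul_steinerWiener_lucasCube k
    have h2 : 2 ≤ lucasNum (k + 2) := by
      rw [lucasNum_succ]
      have := Nat.fib_pos.2 (show 0 < k + 1 + 2 by omega)
      have := Nat.fib_pos.2 (show 0 < k + 1 by omega)
      omega
    replace key := congrArg (Nat.cast : ℕ → ℝ) key
    push_cast [h2] at key
    rw [show k + 2 - 1 = k + 1 by omega]
    push_cast
    linear_combination key / 4

/-- For any `n ≥ 1`, the Steiner 3-Wiener index of the Lucas cube satisfies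
`SW_3(Λ_n) = (n/2)·F_{n−1}·F_{n+1}·(L_n − 2)`. -/
theorem steinerWiener_three_lucasCube (n : ℕ) (hn : 1 ≤ n) :
    (steinerWiener (lucasCube n) 3 : ℝ) =
      ((n : ℝ) / 2) * (Nat.fib (n - 1) : ℝ) * (Nat.fib (n + 1) : ℝ) *
        ((lucasNum n : ℝ) - 2) :=
  steinerWiener_three_lucasCube_general n
end

section
/- Let G be a connected block graph with blocks B_1, B_2, ..., B_t. Then the number nm(G) of non-modular triples of vertices of G equals Σ_{i=1}^{t} N_3(G ∖ B_i), where G ∖ B_i denotes the graph obtained from G by deleting all edges of block B_i. -/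
/-- `v` is a cut vertex of `H`: `H` is connected and deleting `v` leaves a nonempty
disconnected graph. -/
def IsCutVertex {V : Type*} (H : SimpleGraph V) (v : V) : Prop :=
  H.Connected ∧ ({w : V | w ≠ v}).Nonempty ∧ ¬(H.induce {w : V | w ≠ v}).Connected

/-- `B` is a block of `G`: a maximal set of vertices inducing a connected subgraph
having no cut vertices. -/
def IsBlock {V : Type*} (G : SimpleGraph V) (B : Set V) : Prop :=
  B.Nonempty ∧ (G.induce B).Connected ∧ (∀ v : B, ¬IsCutVertex (G.induce B) v) ∧
    ∀ C : Set V, B ⊆ C → C.Nonempty → (G.induce C).Connected →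
      (∀ v : C, ¬IsCutVertex (G.induce C) v) → B = C

/-- The graph obtained from `G` by deleting all edges joining two vertices of `B`. -/
def deleteEdgesIn {V : Type*} (G : SimpleGraph V) (B : Set V) : SimpleGraph V where
  Adj u v := G.Adj u v ∧ ¬(u ∈ B ∧ v ∈ B)
  symm := ⟨fun _ _ h => ⟨h.1.symm, fun hc => h.2 ⟨hc.2, hc.1⟩⟩⟩
  loopless := ⟨fun _ h => G.irrefl h.1⟩

open scoped Classical in
/-- `N_3(H)`: the number of (unordered) triples of vertices of `H` lying in three
pairwise different connected components of `H`; this equals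
`Σ_{{i,j,k}} n(H_i)·n(H_j)·n(H_k)` over triples of components. -/
noncomputable def N3 {V : Type*} (H : SimpleGraph V) [Fintype V] : ℕ :=
  ((Finset.univ : Finset V).powersetCard 3 |>.filter fun S =>
    ∀ u ∈ S, ∀ v ∈ S, u ≠ v →
      H.connectedComponentMk u ≠ H.connectedComponentMk v).card

open scoped Classical in
/-- `nm(G)`: the number of non-modular (unordered) triples of vertices of `G`, i.e.
triples `{x,y,z}` of distinct vertices with `I(x,y) ∩ I(x,z) ∩ I(y,z) = ∅`. -/
noncomputable def nmTriples {V : Type*} (G : SimpleGraph V) [Fintype V] : ℕ :=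
  ((Finset.univ : Finset V).powersetCard 3 |>.filter fun S =>
    ∀ a ∈ S, ∀ b ∈ S, ∀ c ∈ S, a ≠ b → a ≠ c → b ≠ c →
      interval G a b ∩ interval G a c ∩ interval G b c = ∅).card

/-!
For a block `B` of a connected block graph, distinct vertices of `B` lie in distinct components
of `G ∖ B` (a path between them outside `B` would enlarge the block), and a geodesic joining two
components of `G ∖ B` passes through the unique vertex ("gate") of `B` in each of them. Hence
three vertices in three distinct components of `G ∖ B` have no common vertex in their three
intervals. Conversely, every triple without such a common vertex is separated in this way by
some block, and this block is unique because it contains the gates of two of the vertices. The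
non-modular triples are thus partitioned according to their separating block, and those
separated by `B_i` are counted by `N_3(G ∖ B_i)`.
-/

open SimpleGraph Finset

section

variable {V : Type*} {G : SimpleGraph V} {B : Set V}

lemma interval_comm (u v : V) : interval G u v = interval G v u := by
  ext x
  simp only [interval, Set.mem_ofPred_eq]
  rw [dist_comm (u := u) (v := x), dist_comm (u := x) (v := v), dist_comm (u := u) (v := v)]
  omega

lemma left_mem_interval (u v : V) : u ∈ interval G u v := by
  simp [interval]

lemma SimpleGraph.Connected.interval_subset_interval (hG : G.Connected) {u v b : V}
    (hb : b ∈ interval G u v) : interval G b v ⊆ interval G u v := by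
  intro m hm
  simp only [interval, Set.mem_ofPred_eq] at *
  have := hG.dist_triangle (u := u) (v := b) (w := m)
  have := hG.dist_triangle (u := u) (v := m) (w := v)
  omega

lemma SimpleGraph.Connected.exists_adj_mem_interval (hG : G.Connected) {u v : V} (huv : u ≠ v) :
    ∃ w, G.Adj u w ∧ w ∈ interval G u v := by
  obtain ⟨W, hW⟩ := hG.exists_walk_length_eq_dist u v
  have hW' : ¬W.Nil := Walk.not_nil_of_ne huv
  refine ⟨W.snd, W.adj_snd hW', ?_⟩
  have h1 : G.dist u W.snd = 1 := dist_eq_one_iff_adj.2 (W.adj_snd hW')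
  have h2 := dist_le W.tail
  have h3 := W.length_tail_add_one hW'
  have h4 := hG.dist_triangle (u := u) (v := W.snd) (w := v)
  simp only [interval, Set.mem_ofPred_eq]
  omega

lemma SimpleGraph.IsClique.dist_le_one (hB : G.IsClique B) {p q : V} (hp : p ∈ B)
    (hq : q ∈ B) : G.dist p q ≤ 1 := by
  rcases eq_or_ne p q with rfl | hpq
  · simp
  · exact (dist_eq_one_iff_adj.2 (hB hp hq hpq)).le

lemma SimpleGraph.IsClique.induce_preconnected (hB : G.IsClique B) :
    (G.induce B).Preconnected := by
  rw [induce_eq_top.2 hB]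
  exact preconnected_top

lemma deleteEdgesIn_le (B : Set V) : deleteEdgesIn G B ≤ G := fun _ _ h => h.1

lemma SimpleGraph.Connected.exists_crossing_of_not_reachable (hG : G.Connected)
    (hB : G.IsClique B) {u v : V} (h : ¬(deleteEdgesIn G B).Reachable u v) :
    ∃ p ∈ B, ∃ q ∈ B, (deleteEdgesIn G B).Reachable u p ∧ (deleteEdgesIn G B).Reachable q v ∧
      G.dist u p + 1 + G.dist q v ≤ G.dist u v := by
  have huv : u ≠ v := by rintro rfl; exact h .rfl
  obtain ⟨w, huw, hw⟩ := hG.exists_adj_mem_interval huv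
  have hdw : G.dist u w = 1 := dist_eq_one_iff_adj.2 huw
  simp only [interval, Set.mem_ofPred_eq] at hw
  have hrec : ¬(deleteEdgesIn G B).Reachable w v →
      ∃ p ∈ B, ∃ q ∈ B, (deleteEdgesIn G B).Reachable w p ∧
        (deleteEdgesIn G B).Reachable q v ∧ G.dist w p + 1 + G.dist q v ≤ G.dist w v :=
    fun hwv => hG.exists_crossing_of_not_reachable hB hwv
  by_cases huwB : u ∈ B ∧ w ∈ B
  · refine ⟨u, huwB.1, w, huwB.2, .rfl, ?_, by rw [dist_self]; omega⟩
    -- a second crossing of `B` could be shortcut through the clique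
    by_contra hwv
    obtain ⟨p, hp, q, hq, -, -, hd⟩ := hrec hwv
    have := hB.dist_le_one huwB.1 hq
    have := hG.dist_triangle (u := u) (v := q) (w := v)
    omega
  · have huw' : (deleteEdgesIn G B).Reachable u w := Adj.reachable ⟨huw, huwB⟩
    obtain ⟨p, hp, q, hq, hwp, hqv, hd⟩ := hrec fun hwv => h (huw'.trans hwv)
    refine ⟨p, hp, q, hq, huw'.trans hwp, hqv, ?_⟩
    have := hG.dist_triangle (u := u) (v := w) (w := p)
    omega
termination_by G.dist u v
decreasing_by simp only [interval, Set.mem_ofPred_eq] at hw; omega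

lemma SimpleGraph.Connected.mem_interval_of_crossing (hG : G.Connected) (hB : G.IsClique B)
    {u v p q : V} (hp : p ∈ B) (hq : q ∈ B) (hd : G.dist u p + 1 + G.dist q v ≤ G.dist u v) :
    p ∈ interval G u v := by
  have := hB.dist_le_one hp hq
  have := hG.dist_triangle (u := u) (v := p) (w := v)
  have := hG.dist_triangle (u := p) (v := q) (w := v)
  simp only [interval, Set.mem_ofPred_eq]
  omega

lemma SimpleGraph.Connected.reachable_or_reachable_of_mem_interval (hG : G.Connected)
    (hB : G.IsClique B) {u v m : V} (hm : m ∈ interval G u v) :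
    (deleteEdgesIn G B).Reachable u m ∨ (deleteEdgesIn G B).Reachable m v := by
  by_contra! ⟨hum, hmv⟩
  obtain ⟨p, hp, q₁, -, -, -, hd₁⟩ := hG.exists_crossing_of_not_reachable hB hum
  obtain ⟨p₂, -, q, hq, -, -, hd₂⟩ := hG.exists_crossing_of_not_reachable hB hmv
  have := hB.dist_le_one hp hq
  have := hG.dist_triangle (u := u) (v := p) (w := v)
  have := hG.dist_triangle (u := p) (v := q) (w := v)
  simp only [interval, Set.mem_ofPred_eq] at hm
  omega

lemma SimpleGraph.Connected.reachable_of_mem_interval_inter (hG : G.Connected)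
    (hB : G.IsClique B) {x y z g : V} (hy : g ∈ interval G x y) (hz : g ∈ interval G x z)
    (hyz : ¬(deleteEdgesIn G B).Reachable y z) : (deleteEdgesIn G B).Reachable x g := by
  rcases hG.reachable_or_reachable_of_mem_interval hB hy with h | hgy
  · exact h
  rcases hG.reachable_or_reachable_of_mem_interval hB hz with h | hgz
  · exact h
  exact absurd (hgy.symm.trans hgz) hyz

lemma SimpleGraph.Connected.interval_inter_eq_empty_of_not_reachable (hG : G.Connected)
    (hB : G.IsClique B) {x y z : V} (hxy : ¬(deleteEdgesIn G B).Reachable x y)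
    (hxz : ¬(deleteEdgesIn G B).Reachable x z) (hyz : ¬(deleteEdgesIn G B).Reachable y z) :
    interval G x y ∩ interval G x z ∩ interval G y z = ∅ := by
  refine Set.eq_empty_of_forall_notMem fun m ⟨⟨hm₁, hm₂⟩, hm₃⟩ => ?_
  have hxm := hG.reachable_of_mem_interval_inter hB hm₁ hm₂ hyz
  rcases hG.reachable_or_reachable_of_mem_interval hB hm₃ with h | h
  · exact hxy (hxm.trans h.symm)
  · exact hxz (hxm.trans h)

lemma SimpleGraph.Walk.IsPath.notMem_support_takeUntil_or_dropUntil [DecidableEq V]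
    {a b u v : V} {W : G.Walk a b} (hW : W.IsPath) (hu : u ∈ W.support) (hvu : v ≠ u) :
    v ∉ (W.takeUntil u hu).support ∨ v ∉ (W.dropUntil u hu).support := by
  by_contra! ⟨h₁, h₂⟩
  have hnodup := hW.support_nodup
  rw [← W.take_spec hu, Walk.support_append] at hnodup
  rw [← Walk.cons_tail_support] at h₂
  exact List.disjoint_of_nodup_append hnodup h₁ ((List.mem_cons.1 h₂).resolve_left hvu)

-- Every vertex of the path is joined, avoiding `v`, to an end of the path.
lemma SimpleGraph.IsClique.induce_union_support_diff_connected (hB : G.IsClique B) {p q : V}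
    (hp : p ∈ B) (hq : q ∈ B) (hpq : p ≠ q) {W : G.Walk p q} (hW : W.IsPath) (v : V) :
    (G.induce ((B ∪ {x | x ∈ W.support}) \ {v})).Connected := by
  classical
  obtain ⟨r, hrB, hrv⟩ : ∃ r ∈ B, r ≠ v := by
    by_cases hpv : p = v
    · exact ⟨q, hq, fun hqv => hpq (hpv.trans hqv.symm)⟩
    · exact ⟨p, hp, hpv⟩
  have hBv : (G.induce (B \ {v})).Preconnected := (hB.subset Set.sdiff_subset).induce_preconnected
  have patch : ∀ u ∈ W.support, u ≠ v → ∃ e ∈ B, ∃ P : G.Walk e u,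
      v ∉ P.support ∧ ∀ x ∈ P.support, x ∈ W.support := by
    intro u hu huv
    rcases hW.notMem_support_takeUntil_or_dropUntil hu huv.symm with h | h
    · exact ⟨p, hp, W.takeUntil u hu, h, fun x hx => W.support_takeUntil_subset_support hu hx⟩
    · refine ⟨q, hq, (W.dropUntil u hu).reverse, by simpa using h, fun x hx => ?_⟩
      exact W.support_dropUntil_subset_support hu (by simpa using hx)
  refine induce_connected_of_patches r ⟨Or.inl hrB, hrv⟩ fun {u} hu => ?_
  obtain ⟨huB | huW, huv⟩ := hu
  · exact ⟨B \ {v}, Set.sdiff_subset_sdiff_left Set.subset_union_left, ⟨hrB, hrv⟩, ⟨huB, huv⟩,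
      hBv _ _⟩
  obtain ⟨e, heB, P, hvP, hPW⟩ := patch u huW huv
  have hev : e ≠ v := fun h => hvP (h ▸ P.start_mem_support)
  refine ⟨B \ {v} ∪ {x | x ∈ P.support}, ?_, Or.inl ⟨hrB, hrv⟩, Or.inr P.end_mem_support,
    (induce_union_connected hBv P.connected_induce_support.preconnected
      ⟨e, ⟨heB, hev⟩, P.start_mem_support⟩) _ _⟩
  rintro x (hx | hx)
  · exact ⟨Or.inl hx.1, hx.2⟩
  · exact ⟨Or.inr (hPW x hx), fun h => hvP (h ▸ hx)⟩

lemma not_isCutVertex_of_induce_diff_connected {C : Set V} (v : C)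
    (h : (G.induce (C \ {(v : V)})).Connected) : ¬IsCutVertex (G.induce C) v := by
  rintro ⟨-, -, hdisc⟩
  let e : ↥(C \ {(v : V)}) ≃ {w : C // w ∈ {w : C | w ≠ v}} :=
    { toFun x := ⟨⟨x, x.2.1⟩, fun hx => x.2.2 (congrArg Subtype.val hx)⟩
      invFun y := ⟨y.1, y.1.2, fun hy => y.2 (Subtype.ext hy)⟩ }
  exact hdisc ((show G.induce (C \ {(v : V)}) ≃g (G.induce C).induce {w | w ≠ v} from
    { e with map_rel_iff' := .rfl }).connected_iff.1 h)

lemma IsBlock.eq_of_reachable (hB : IsBlock G B) (hBc : G.IsClique B) {p q : V} (hp : p ∈ B)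
    (hq : q ∈ B) (h : (deleteEdgesIn G B).Reachable p q) : p = q := by
  by_contra hpq
  obtain ⟨P, hP, -⟩ := h.exists_path_of_dist
  set W := P.mapLe (deleteEdgesIn_le B)
  have hW : W.IsPath := hP.mapLe _
  set C := B ∪ {x | x ∈ W.support}
  have hC : (G.induce C).Connected :=
    induce_union_connected hBc.induce_preconnected W.connected_induce_support.preconnected
      ⟨p, hp, W.start_mem_support⟩
  have hBC : B = C := hB.2.2.2 C Set.subset_union_left ⟨p, Or.inl hp⟩ hC fun v =>
    not_isCutVertex_of_induce_diff_connected v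
      (hBc.induce_union_support_diff_connected hp hq hpq hW v)
  have hsnd : P.snd ∈ C := Or.inr (by simp [W])
  rw [← hBC] at hsnd
  exact (P.adj_snd (Walk.not_nil_of_ne hpq)).2 ⟨hp, hsnd⟩

lemma exists_isBlock_of_adj [Finite V] {a b : V} (hab : G.Adj a b) :
    ∃ B, IsBlock G B ∧ a ∈ B ∧ b ∈ B := by
  have hsingle : ∀ x : V, (G.induce {x}).Connected := fun x => by
    rw [induce_singleton_eq_top]
    exact connected_top
  obtain ⟨B, ⟨haB, hbB, hBconn, hBcut⟩, hBmax⟩ := Set.Finite.exists_maximalFor id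
    {C | a ∈ C ∧ b ∈ C ∧ (G.induce C).Connected ∧ ∀ v : C, ¬IsCutVertex (G.induce C) v}
    (Set.toFinite _) ⟨{a, b}, Or.inl rfl, Or.inr rfl, induce_pair_connected_of_adj hab,
      fun ⟨v, hv⟩ => not_isCutVertex_of_induce_diff_connected _ (by
        rcases hv with rfl | rfl
        · rw [Set.pair_sdiff_left hab.ne]; exact hsingle b
        · rw [Set.pair_sdiff_right hab.ne]; exact hsingle a)⟩
  exact ⟨B, ⟨⟨a, haB⟩, hBconn, hBcut, fun C hBC _ hCconn hCcut =>
    hBC.antisymm (hBmax ⟨hBC haB, hBC hbB, hCconn, hCcut⟩ hBC)⟩, haB, hbB⟩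

lemma IsBlock.eq_of_mem_of_mem {B' : Set V} (hB : IsBlock G B) (hBc : G.IsClique B)
    (hB' : IsBlock G B') (hB'c : G.IsClique B') {x y : V} (hxy : x ≠ y) (hx : x ∈ B)
    (hy : y ∈ B) (hx' : x ∈ B') (hy' : y ∈ B') : B = B' := by
  have key : ∀ {B B' : Set V}, G.IsClique B → IsBlock G B' → G.IsClique B' →
      x ∈ B → y ∈ B → x ∈ B' → y ∈ B' → B ⊆ B' := by
    intro B B' hBc hB' hB'c hx hy hx' hy' w hw
    by_contra hw'
    have hxw : (deleteEdgesIn G B').Reachable x w :=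
      Adj.reachable ⟨hBc hx hw (fun h => hw' (h ▸ hx')), fun h => hw' h.2⟩
    have hwy : (deleteEdgesIn G B').Reachable w y :=
      Adj.reachable ⟨hBc hw hy (fun h => hw' (h ▸ hy')), fun h => hw' h.1⟩
    exact hxy (hB'.eq_of_reachable hB'c hx' hy' (hxw.trans hwy))
  exact (key hBc hB' hB'c hx hy hx' hy').antisymm (key hB'c hB hBc hx' hy' hx hy)

lemma IsBlock.mem_interval_of_reachable (hG : G.Connected) (hB : IsBlock G B)
    (hBc : G.IsClique B) {u v g : V} (huv : ¬(deleteEdgesIn G B).Reachable u v) (hg : g ∈ B)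
    (hug : (deleteEdgesIn G B).Reachable u g) : g ∈ interval G u v := by
  obtain ⟨p, hp, q, hq, hup, -, hd⟩ := hG.exists_crossing_of_not_reachable hBc huv
  rw [hB.eq_of_reachable hBc hg hp (hug.symm.trans hup)]
  exact hG.mem_interval_of_crossing hBc hp hq hd

lemma IsBlock.not_reachable_of_mem_interval (hG : G.Connected) (hB : IsBlock G B)
    (hBc : G.IsClique B) {x x' y : V} (hx : x ∈ B) (hx' : x' ∈ B) (hne : x ≠ x')
    (hx'y : x' ∈ interval G x y) : ¬(deleteEdgesIn G B).Reachable x y := fun h => hne <| by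
  rcases hG.reachable_or_reachable_of_mem_interval hBc hx'y with h' | h'
  · exact hB.eq_of_reachable hBc hx hx' h'
  · exact hB.eq_of_reachable hBc hx hx' (h.trans h'.symm)

/-- Induction on `d(x,y) + d(x,z)`: the block `B` of the first edge of a geodesic from `x` to
`y` either separates the triple, or has `x` as a median, or can be crossed by moving `x` to the
gate `b` of `y` in `B`, which lies in `I(x,y) ∩ I(x,z)`. -/
theorem SimpleGraph.Connected.exists_isBlock_not_reachable_or_interval_inter_nonempty [Finite V]
    (hG : G.Connected) (hBG : ∀ S : Set V, IsBlock G S → G.IsClique S) (x y z : V) :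
    (∃ B, IsBlock G B ∧ ¬(deleteEdgesIn G B).Reachable x y ∧
        ¬(deleteEdgesIn G B).Reachable x z ∧ ¬(deleteEdgesIn G B).Reachable y z) ∨
      (interval G x y ∩ interval G x z ∩ interval G y z).Nonempty := by
  rcases eq_or_ne x y with rfl | hxy
  · exact .inr ⟨x, ⟨left_mem_interval x x, left_mem_interval x z⟩, left_mem_interval x z⟩
  obtain ⟨x₁, hxx₁, hx₁⟩ := hG.exists_adj_mem_interval hxy
  obtain ⟨B, hB, hxB, hx₁B⟩ := exists_isBlock_of_adj hxx₁
  have hBc := hBG B hB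
  have hsep := hB.not_reachable_of_mem_interval hG hBc hxB hx₁B hxx₁.ne hx₁
  by_cases hxz : (deleteEdgesIn G B).Reachable x z
  · have hx : x ∈ interval G z y := hB.mem_interval_of_reachable hG hBc
      (fun h => hsep (hxz.trans h)) hxB hxz.symm
    exact .inr ⟨x, ⟨left_mem_interval x y, left_mem_interval x z⟩, interval_comm z y ▸ hx⟩
  by_cases hyz : (deleteEdgesIn G B).Reachable y z
  swap
  · exact .inl ⟨B, hB, hsep, hxz, hyz⟩
  obtain ⟨-, -, b, hbB, -, hby, -⟩ := hG.exists_crossing_of_not_reachable hBc hsep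
  have hbxy : b ∈ interval G x y := interval_comm y x ▸
    hB.mem_interval_of_reachable hG hBc (fun h => hsep h.symm) hbB hby.symm
  have hbxz : b ∈ interval G x z := interval_comm z x ▸
    hB.mem_interval_of_reachable hG hBc (fun h => hxz h.symm) hbB (hyz.symm.trans hby.symm)
  have hdecr : G.dist b y + G.dist b z < G.dist x y + G.dist x z := by
    have := hG.pos_dist_of_ne (u := x) (v := b) fun h => hsep (h ▸ hby)
    simp only [interval, Set.mem_ofPred_eq] at hbxy hbxz
    omega
  rcases hG.exists_isBlock_not_reachable_or_interval_inter_nonempty hBG b y z with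
    ⟨B', hB', hby', hbz', hyz'⟩ | ⟨m, ⟨hmy, hmz⟩, hm⟩
  · have hxb := hG.reachable_of_mem_interval_inter (hBG B' hB') hbxy hbxz hyz'
    exact .inl ⟨B', hB', fun h => hby' (hxb.symm.trans h), fun h => hbz' (hxb.symm.trans h), hyz'⟩
  · exact .inr ⟨m, ⟨hG.interval_subset_interval hbxy hmy, hG.interval_subset_interval hbxz hmz⟩,
      hm⟩
termination_by G.dist x y + G.dist x z

theorem SimpleGraph.Connected.interval_inter_eq_empty_iff [Finite V] (hG : G.Connected)
    (hBG : ∀ S : Set V, IsBlock G S → G.IsClique S) {x y z : V} :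
    interval G x y ∩ interval G x z ∩ interval G y z = ∅ ↔
      ∃ B, IsBlock G B ∧ ¬(deleteEdgesIn G B).Reachable x y ∧
        ¬(deleteEdgesIn G B).Reachable x z ∧ ¬(deleteEdgesIn G B).Reachable y z := by
  refine ⟨fun h => ?_, fun ⟨B, hB, hxy, hxz, hyz⟩ =>
    hG.interval_inter_eq_empty_of_not_reachable (hBG B hB) hxy hxz hyz⟩
  rw [← Set.not_nonempty_iff_eq_empty] at h
  exact (hG.exists_isBlock_not_reachable_or_interval_inter_nonempty hBG x y z).resolve_right h

theorem SimpleGraph.Connected.eq_of_not_reachable (hG : G.Connected) {B' : Set V}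
    (hB : IsBlock G B) (hBc : G.IsClique B) (hB' : IsBlock G B') (hB'c : G.IsClique B')
    {x y z : V} (hxy : ¬(deleteEdgesIn G B).Reachable x y)
    (hxz : ¬(deleteEdgesIn G B).Reachable x z) (hyz : ¬(deleteEdgesIn G B).Reachable y z)
    (hxy' : ¬(deleteEdgesIn G B').Reachable x y) (hxz' : ¬(deleteEdgesIn G B').Reachable x z)
    (hyz' : ¬(deleteEdgesIn G B').Reachable y z) : B = B' := by
  obtain ⟨gx, hgx, gy, hgy, hxgx, hgyy, -⟩ := hG.exists_crossing_of_not_reachable hBc hxy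
  have hx' : (deleteEdgesIn G B').Reachable x gx := hG.reachable_of_mem_interval_inter hB'c
    (hB.mem_interval_of_reachable hG hBc hxy hgx hxgx)
    (hB.mem_interval_of_reachable hG hBc hxz hgx hxgx) hyz'
  have hy' : (deleteEdgesIn G B').Reachable y gy := hG.reachable_of_mem_interval_inter hB'c
    (hB.mem_interval_of_reachable hG hBc (fun h => hxy h.symm) hgy hgyy.symm)
    (hB.mem_interval_of_reachable hG hBc hyz hgy hgyy.symm) hxz'
  have hne : gx ≠ gy := fun h => hxy (hxgx.trans (h ▸ hgyy))
  have hmem : gx ∈ B' ∧ gy ∈ B' := by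
    by_contra h
    have hadj : (deleteEdgesIn G B').Adj gx gy := ⟨hBc hgx hgy hne, h⟩
    exact hxy' (hx'.trans (hadj.reachable.trans hy'.symm))
  exact hB.eq_of_mem_of_mem hBc hB' hB'c hne hgx hgy hmem.1 hmem.2

theorem SimpleGraph.Connected.forall_interval_inter_eq_empty_iff [Finite V] (hG : G.Connected)
    (hBG : ∀ S : Set V, IsBlock G S → G.IsClique S) {S : Finset V} (hS : #S = 3) :
    (∀ a ∈ S, ∀ b ∈ S, ∀ c ∈ S, a ≠ b → a ≠ c → b ≠ c →
        interval G a b ∩ interval G a c ∩ interval G b c = ∅) ↔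
      ∃ B, IsBlock G B ∧ (S : Set V).Pairwise fun u v => ¬(deleteEdgesIn G B).Reachable u v := by
  classical
  obtain ⟨a, b, c, hab, hac, hbc, rfl⟩ := card_eq_three.1 hS
  constructor
  · intro h
    obtain ⟨B, hB, hsab, hsac, hsbc⟩ := (hG.interval_inter_eq_empty_iff hBG).1
      (h a (by simp) b (by simp) c (by simp) hab hac hbc)
    exact ⟨B, hB, by simp [Set.pairwise_insert, reachable_comm, *]⟩
  · rintro ⟨B, hB, h⟩ x hx y hy z hz hxy hxz hyz
    exact (hG.interval_inter_eq_empty_iff hBG).2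
      ⟨B, hB, h hx hy hxy, h hx hz hxz, h hy hz hyz⟩

theorem SimpleGraph.Connected.eq_of_pairwise_not_reachable (hG : G.Connected)
    (hBG : ∀ S : Set V, IsBlock G S → G.IsClique S) {S : Finset V} (hS : #S = 3)
    {B' : Set V} (hB : IsBlock G B) (hB' : IsBlock G B')
    (h : (S : Set V).Pairwise fun u v => ¬(deleteEdgesIn G B).Reachable u v)
    (h' : (S : Set V).Pairwise fun u v => ¬(deleteEdgesIn G B').Reachable u v) : B = B' := by
  classical
  obtain ⟨a, b, c, hab, hac, hbc, rfl⟩ := card_eq_three.1 hS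
  exact hG.eq_of_not_reachable hB (hBG B hB) hB' (hBG B' hB')
    (h (by simp) (by simp) hab) (h (by simp) (by simp) hac) (h (by simp) (by simp) hbc)
    (h' (by simp) (by simp) hab) (h' (by simp) (by simp) hac) (h' (by simp) (by simp) hbc)

open scoped Classical in
lemma N3_eq_card_filter_pairwise [Fintype V] (H : SimpleGraph V) :
    N3 H = #((univ.powersetCard 3).filter fun S : Finset V =>
      (S : Set V).Pairwise fun u v => ¬H.Reachable u v) := by
  refine congrArg card (filter_congr fun S _ => ?_)
  simp [Set.Pairwise, ConnectedComponent.eq]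

end

/-- For a connected block graph `G` with blocks `B_1, …, B_t`, the number of
non-modular triples of `G` equals `Σ_{i=1}^{t} N_3(G ∖ B_i)`, where `G ∖ B_i` is
obtained from `G` by deleting all edges of the block `B_i`. -/
theorem nmTriples_blockGraph {V : Type*} (G : SimpleGraph V) [Fintype V]
    (hG : G.Connected) (hBG : ∀ S : Set V, IsBlock G S → G.IsClique S)
    (t : ℕ) (B : Fin t → Set V) (hinj : Function.Injective B)
    (hblocks : ∀ i, IsBlock G (B i))
    (hall : ∀ S : Set V, IsBlock G S → ∃ i, S = B i) :
    nmTriples G = ∑ i, N3 (deleteEdgesIn G (B i)) := by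
  classical
  have hdisj : (↑(univ : Finset (Fin t)) : Set (Fin t)).PairwiseDisjoint
      fun i => (univ.powersetCard 3).filter fun S : Finset V =>
        (S : Set V).Pairwise fun u v => ¬(deleteEdgesIn G (B i)).Reachable u v := by
    refine fun i _ j _ hij => disjoint_left.2 fun S hSi hSj => hij (hinj ?_)
    simp only [mem_filter, mem_powersetCard_univ] at hSi hSj
    exact hG.eq_of_pairwise_not_reachable hBG hSi.1 (hblocks i) (hblocks j) hSi.2 hSj.2
  rw [sum_congr rfl fun i _ => N3_eq_card_filter_pairwise _, ← card_biUnion hdisj, nmTriples]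
  congr 1
  ext S
  simp only [mem_filter, mem_biUnion, mem_univ, true_and, mem_powersetCard_univ, exists_and_left]
  refine and_congr_right fun hS => (hG.forall_interval_inter_eq_empty_iff hBG hS).trans ⟨?_, ?_⟩
  · rintro ⟨Bl, hBl, h⟩
    obtain ⟨i, rfl⟩ := hall Bl hBl
    exact ⟨i, h⟩
  · rintro ⟨i, h⟩
    exact ⟨B i, hblocks i, h⟩
end
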